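/- arXiv:1706.08150 — 4 statements merged into one kernel-verified Lean document; each statement's English description precedes it below -/
import Mathlib

section
/- (Abel–Cesàro equivalence.) Suppose the game mapping V satisfies the dynamic programming principle on 𝔇 and U_* : Ω → [0,1]. Then the values 𝒱[π_λ] converge to U_* uniformly on Ω as λ → 0+ if and only if the values 𝒱[ϖ_T] converge to U_* uniformly on Ω as T → +∞. -/
open MeasureTheory Set Filter Topology
open scoped ENNReal

noncomputable section

/-- A probability density on `[0,∞)`: measurable, nonnegative, with total integral `1`
over `(0,∞)`. -/
def IsDensity (ρ : ℝ → ℝ) : Prop :=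
  Measurable ρ ∧ (∀ t, 0 ≤ ρ t) ∧ IntegrableOn ρ (Ioi 0) ∧ (∫ t in Ioi (0 : ℝ), ρ t) = 1

/-- The shifted density `ϱ^T_shift(t) = ϱ(t+T) / ∫_T^∞ ϱ(s) ds`. -/
def shiftD (ρ : ℝ → ℝ) (T : ℝ) : ℝ → ℝ :=
  fun t => ρ (t + T) / ∫ s in Ioi T, ρ s

/-- The scaled density `ϱ^λ_scale(t) = λ · ϱ(λ t)`. -/
def scaleD (ρ : ℝ → ℝ) (l : ℝ) : ℝ → ℝ :=
  fun t => l * ρ (l * t)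

/-- The uniform density `ϖ_T = (1/T)·1_{[0,T]}`. -/
def unifD (T : ℝ) : ℝ → ℝ :=
  fun t => if t ∈ Icc (0 : ℝ) T then 1 / T else 0

/-- The exponential density `π_λ(t) = λ e^{-λ t}`. -/
def expD (l : ℝ) : ℝ → ℝ :=
  fun t => l * Real.exp (-(l * t))

/-- A power density: `ϱ(t) = (α + β t)^{-γ}` on `[0,∞)` for some positive `α, β, γ`. -/
def IsPowerDensity (ρ : ℝ → ℝ) : Prop :=
  IsDensity ρ ∧ ∃ α β γ : ℝ, 0 < α ∧ 0 < β ∧ 0 < γ ∧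
    ∀ t, 0 ≤ t → ρ t = (α + β * t) ^ (-γ)

/-- Piecewise continuity on `(0,∞)`: on every bounded subinterval, continuity off a
finite set. -/
def PiecewiseContinuousOn (ρ : ℝ → ℝ) : Prop :=
  ∀ b > (0 : ℝ), ∃ S : Finset ℝ, ∀ t ∈ Ioo (0 : ℝ) b, t ∉ S → ContinuousAt ρ t

/-- The quantile `q[ϱ](r)`: the minimal positive `s` with `∫₀^s ϱ = r`. -/
def quantileD (ρ : ℝ → ℝ) (r : ℝ) : ℝ :=
  sInf {s : ℝ | 0 < s ∧ (∫ t in Ioc (0 : ℝ) s, ρ t) = r}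

/-- Processes that are constant on each interval `[n, n+1)`. -/
def StepConst {Ω : Type*} (K : Set (ℝ → Ω)) : Prop :=
  ∀ z ∈ K, ∀ n : ℕ, ∀ s ∈ Ioo (0 : ℝ) 1, z (n + s) = z n

/-- A game mapping: a map from bounded payoffs (bounded functions on the set `K` of
processes) to bounded value functions on `Ω`, positively affine and monotone. -/
structure GameMap (Ω : Type*) (K : Set (ℝ → Ω)) where
  V : (K → ℝ) → Ω → ℝ
  bdd : ∀ c : K → ℝ, (∃ M, ∀ z, |c z| ≤ M) → ∃ M, ∀ ω, |V c ω| ≤ M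
  affine : ∀ c : K → ℝ, (∃ M, ∀ z, |c z| ≤ M) → ∀ A B : ℝ, 0 ≤ A →
    V (fun z => A * c z + B) = fun ω => A * V c ω + B
  mono : ∀ c₁ c₂ : K → ℝ, (∃ M, ∀ z, |c₁ z| ≤ M) → (∃ M, ∀ z, |c₂ z| ≤ M) →
    (∀ z, c₁ z ≤ c₂ z) → ∀ ω, V c₁ ω ≤ V c₂ ω

variable {Ω : Type*}

/-- The averaged payoff `ĉ[ϱ](z) = ∫₀^∞ ϱ(t) g(z(t)) dt`. -/
def avePayoff (K : Set (ℝ → Ω)) (g : Ω → ℝ) (ρ : ℝ → ℝ) : K → ℝ :=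
  fun z => ∫ t in Ioi (0 : ℝ), ρ t * g (z.1 t)

/-- The value `𝒱[ϱ] = V[ĉ[ϱ]]`. -/
def gval {K : Set (ℝ → Ω)} (Vmap : GameMap Ω K) (g : Ω → ℝ) (ρ : ℝ → ℝ) : Ω → ℝ :=
  Vmap.V (avePayoff K g ρ)

/-- The payoff `c^T_ϱ(z) = ∫₀^T ϱ(t) g(z(t)) dt + (∫_T^∞ ϱ)·𝒱[ϱ^T_shift](z(T))`. -/
def dppPayoff {K : Set (ℝ → Ω)} (Vmap : GameMap Ω K) (g : Ω → ℝ) (ρ : ℝ → ℝ) (T : ℝ) :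
    K → ℝ :=
  fun z => (∫ t in Ioc (0 : ℝ) T, ρ t * g (z.1 t))
    + (∫ t in Ioi T, ρ t) * gval Vmap g (shiftD ρ T) (z.1 T)

/-- The dynamic programming principle on `𝔇`. -/
def DPP {K : Set (ℝ → Ω)} (Vmap : GameMap Ω K) (g : Ω → ℝ) : Prop :=
  ∀ ρ : ℝ → ℝ, IsDensity ρ → ∀ T : ℝ, 0 < T → (0 < ∫ t in Ioi T, ρ t) →
    Vmap.V (dppPayoff Vmap g ρ T) = Vmap.V (avePayoff K g ρ)

/-- The discrete version of the dynamic programming principle on `𝔇`. -/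
def DiscreteDPP {K : Set (ℝ → Ω)} (Vmap : GameMap Ω K) (g : Ω → ℝ) : Prop :=
  ∀ ρ : ℝ → ℝ, IsDensity ρ → ∀ n : ℕ, 0 < n → (0 < ∫ t in Ioi (n : ℝ), ρ t) →
    Vmap.V (dppPayoff Vmap g ρ n) = Vmap.V (avePayoff K g ρ)

/-- The asymptotic dynamic programming hypothesis. -/
def ADPP {K : Set (ℝ → Ω)} (Vmap : GameMap Ω K) (g : Ω → ℝ) : Prop :=
  ∀ κ : ℝ, 0 < κ → ∃ γ : ℝ, 0 < γ ∧ ∀ ν : ℝ → ℝ, IsDensity ν → ∀ T : ℝ, 1 < T →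
    eVariationOn ν (Ici 0) < ENNReal.ofReal γ → (∫ t in Ioc (0 : ℝ) T, ν t) < 1 →
    ∀ ω, |Vmap.V (dppPayoff Vmap g ν T) ω - Vmap.V (avePayoff K g ν) ω| < κ

/-- Condition (c): uniform convergence of values for every piecewise-continuous
density, rescaled, as `λ → 0+`. -/
def CondC (Val : (ℝ → ℝ) → Ω → ℝ) (U : Ω → ℝ) : Prop :=
  ∀ μ : ℝ → ℝ, IsDensity μ → PiecewiseContinuousOn μ →
    ∀ ε > (0 : ℝ), ∀ᶠ l in 𝓝[>] (0 : ℝ), ∀ ω, |Val (scaleD μ l) ω - U ω| ≤ ε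

/-- Condition (u): uniform convergence of values for uniform densities as `T → ∞`. -/
def CondU (Val : (ℝ → ℝ) → Ω → ℝ) (U : Ω → ℝ) : Prop :=
  ∀ ε > (0 : ℝ), ∀ᶠ T in (atTop : Filter ℝ), ∀ ω, |Val (unifD T) ω - U ω| ≤ ε

/-- Condition (e): uniform convergence of values for exponential densities as `λ → 0+`. -/
def CondE (Val : (ℝ → ℝ) → Ω → ℝ) (U : Ω → ℝ) : Prop :=
  ∀ ε > (0 : ℝ), ∀ᶠ l in 𝓝[>] (0 : ℝ), ∀ ω, |Val (expD l) ω - U ω| ≤ ε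

/-- Condition (p): uniform convergence of values for the shifts of some power density. -/
def CondP (Val : (ℝ → ℝ) → Ω → ℝ) (U : Ω → ℝ) : Prop :=
  ∃ ρ : ℝ → ℝ, IsPowerDensity ρ ∧
    ∀ ε > (0 : ℝ), ∀ᶠ T in (atTop : Filter ℝ), ∀ ω, |Val (shiftD ρ T) ω - U ω| ≤ ε

/-- Condition (q): uniform convergence of values for the shifts of every power density. -/
def CondQ (Val : (ℝ → ℝ) → Ω → ℝ) (U : Ω → ℝ) : Prop :=
  ∀ ρ : ℝ → ℝ, IsPowerDensity ρ →
    ∀ ε > (0 : ℝ), ∀ᶠ T in (atTop : Filter ℝ), ∀ ω, |Val (shiftD ρ T) ω - U ω| ≤ ε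

/-- Condition (u′): uniform convergence of values for uniform densities over naturals. -/
def CondU' (Val : (ℝ → ℝ) → Ω → ℝ) (U : Ω → ℝ) : Prop :=
  ∀ ε > (0 : ℝ), ∀ᶠ n : ℕ in atTop, ∀ ω, |Val (unifD n) ω - U ω| ≤ ε

/-- Condition (v): uniform convergence of values for every family of densities with
uniformly vanishing sup and suitable bounded variation. -/
def CondV (Val : (ℝ → ℝ) → Ω → ℝ) (U : Ω → ℝ) : Prop :=
  ∀ lstar : ℝ, 0 < lstar → ∀ μ : ℝ → ℝ → ℝ,
    (∀ l ∈ Ioo (0 : ℝ) lstar, IsDensity (μ l)) →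
    (∀ ε > (0 : ℝ), ∀ᶠ l in 𝓝[>] (0 : ℝ), ∀ t > (0 : ℝ), μ l t ≤ ε) →
    (∀ ε ∈ Ioo (0 : ℝ) 1, ∃ C : ℝ≥0∞, C ≠ ⊤ ∧ ∀ l ∈ Ioo (0 : ℝ) lstar,
      eVariationOn (μ l) (Ico 0 (quantileD (μ l) (1 - ε))) *
        ENNReal.ofReal (quantileD (μ l) (1 - ε)) ≤ C) →
    ∀ ε > (0 : ℝ), ∀ᶠ l in 𝓝[>] (0 : ℝ), ∀ ω, |Val (μ l) ω - U ω| ≤ ε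

/-- Condition (∃): existence of a suitable testing family of densities. -/
def CondExists (Val : (ℝ → ℝ) → Ω → ℝ) (U : Ω → ℝ) : Prop :=
  ∃ lstar : ℝ, 0 < lstar ∧ ∃ ρ : ℝ → ℝ → ℝ,
    (∀ l ∈ Ioo (0 : ℝ) lstar, IsDensity (ρ l)) ∧
    (∀ l ∈ Ioo (0 : ℝ) lstar, ρ l 0 = l ∧ ∀ t, 0 ≤ t → ρ l t ≤ l) ∧
    (∀ ε > (0 : ℝ), ∃ δ ∈ Ioo (0 : ℝ) 1, ∃ lε ∈ Ioc (0 : ℝ) lstar,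
      ∀ l, 0 < l → l < lε → ∀ T, 0 < T → T ≤ δ / l → l * (1 - ε) ≤ ρ l T) ∧
    (∃ r₀ ∈ Ioo (0 : ℝ) 1,
      (∀ ε > (0 : ℝ), ∀ᶠ l in 𝓝[>] (0 : ℝ), ∀ ω, |Val (ρ l) ω - U ω| ≤ ε) ∧
      (∀ ε > (0 : ℝ), ∀ᶠ l in 𝓝[>] (0 : ℝ), ∀ T ∈ Ioo (0 : ℝ) (quantileD (ρ l) r₀),
        ∀ ω, |Val (shiftD (ρ l) T) ω - U ω| ≤ ε))

namespace AbelCesaro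

open MeasureTheory Set Filter Topology

variable {Ω : Type*} {K : Set (ℝ → Ω)}

/-! ### Basic game-map lemmas -/

theorem vconst (Vmap : GameMap Ω K) (B : ℝ) : Vmap.V (fun _ => B) = fun _ => B := by
  have h := Vmap.affine (fun _ => (0:ℝ)) ⟨0, fun z => by simp⟩ 0 B le_rfl
  simpa using h

theorem vadd_const (Vmap : GameMap Ω K) (c : K → ℝ) (h : ∃ M, ∀ z, |c z| ≤ M) (B : ℝ) :
    Vmap.V (fun z => c z + B) = fun ω => Vmap.V c ω + B := by
  have h2 := Vmap.affine c h 1 B zero_le_one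
  simpa using h2

theorem vnonexp (Vmap : GameMap Ω K) {c₁ c₂ : K → ℝ} {d : ℝ}
    (h₁ : ∃ M, ∀ z, |c₁ z| ≤ M) (h₂ : ∃ M, ∀ z, |c₂ z| ≤ M)
    (h : ∀ z, |c₁ z - c₂ z| ≤ d) (ω : Ω) :
    |Vmap.V c₁ ω - Vmap.V c₂ ω| ≤ d := by
  obtain ⟨M₁, hM₁⟩ := h₁; obtain ⟨M₂, hM₂⟩ := h₂
  have hb₁ : ∃ M, ∀ z, |(fun z => c₁ z + d) z| ≤ M :=
    ⟨M₁ + |d|, fun z => le_trans (abs_add_le _ _) (add_le_add (hM₁ z) le_rfl)⟩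
  have hb₂ : ∃ M, ∀ z, |(fun z => c₂ z + d) z| ≤ M :=
    ⟨M₂ + |d|, fun z => le_trans (abs_add_le _ _) (add_le_add (hM₂ z) le_rfl)⟩
  have hle : Vmap.V c₁ ω ≤ Vmap.V c₂ ω + d := by
    have h1 := Vmap.mono c₁ (fun z => c₂ z + d) ⟨M₁, hM₁⟩ hb₂
      (fun z => by have h2 := abs_le.1 (h z); show c₁ z ≤ c₂ z + d; linarith [h2.2]) ω
    have he := congrFun (vadd_const Vmap c₂ ⟨M₂, hM₂⟩ d) ω
    rw [he] at h1; exact h1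
  have hge : Vmap.V c₂ ω ≤ Vmap.V c₁ ω + d := by
    have h1 := Vmap.mono c₂ (fun z => c₁ z + d) ⟨M₂, hM₂⟩ hb₁
      (fun z => by have h2 := abs_le.1 (h z); show c₂ z ≤ c₁ z + d; linarith [h2.1]) ω
    have he := congrFun (vadd_const Vmap c₁ ⟨M₁, hM₁⟩ d) ω
    rw [he] at h1; exact h1
  rw [abs_le]; constructor <;> linarith

theorem vbound (Vmap : GameMap Ω K) {c : K → ℝ} (h0 : ∀ z, 0 ≤ c z) (h1 : ∀ z, c z ≤ 1)
    (ω : Ω) : Vmap.V c ω ∈ Icc (0:ℝ) 1 := by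
  have hb : ∃ M, ∀ z, |c z| ≤ M := ⟨1, fun z => abs_le.2 ⟨by linarith [h0 z], h1 z⟩⟩
  have hb0 : ∃ M, ∀ z : K, |(fun _ => (0:ℝ)) z| ≤ M := ⟨0, fun z => by simp⟩
  have hb1 : ∃ M, ∀ z : K, |(fun _ => (1:ℝ)) z| ≤ M := ⟨1, fun z => by simp⟩
  constructor
  · have h2 := Vmap.mono (fun _ => (0:ℝ)) c hb0 hb h0 ω
    have he := congrFun (vconst Vmap 0) ω
    rw [he] at h2; exact h2
  · have h2 := Vmap.mono c (fun _ => (1:ℝ)) hb hb1 h1 ω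
    have he := congrFun (vconst Vmap 1) ω
    rw [he] at h2; exact h2

/-! ### Payoff lemmas -/

variable {g : Ω → ℝ}

theorem payoff_integrableOn (hg : ∀ ω, g ω ∈ Icc (0:ℝ) 1)
    (hgm : ∀ z ∈ K, Measurable fun t => g (z t)) {ρ : ℝ → ℝ}
    (hm : Measurable ρ) (hnn : ∀ t, 0 ≤ ρ t) {s : Set ℝ}
    (hint : IntegrableOn ρ s) (z : K) :
    IntegrableOn (fun t => ρ t * g (z.1 t)) s := by
  apply Integrable.mono' hint (hm.mul (hgm z.1 z.2)).aestronglyMeasurable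
  filter_upwards with t
  have h1 := (hg (z.1 t)).1; have h2 := (hg (z.1 t)).2
  rw [Real.norm_eq_abs, Pi.mul_apply, abs_mul, abs_of_nonneg (hnn t), abs_of_nonneg h1]
  nlinarith [hnn t]

theorem avePayoff_nonneg (hg : ∀ ω, g ω ∈ Icc (0:ℝ) 1) {ρ : ℝ → ℝ}
    (hnn : ∀ t, 0 ≤ ρ t) (z : K) : 0 ≤ avePayoff K g ρ z :=
  setIntegral_nonneg measurableSet_Ioi fun t _ => mul_nonneg (hnn t) (hg _).1

theorem avePayoff_le_one (hg : ∀ ω, g ω ∈ Icc (0:ℝ) 1)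
    (hgm : ∀ z ∈ K, Measurable fun t => g (z t)) {ρ : ℝ → ℝ}
    (hρ : IsDensity ρ) (z : K) : avePayoff K g ρ z ≤ 1 := by
  have h : avePayoff K g ρ z ≤ ∫ t in Ioi (0:ℝ), ρ t := by
    apply setIntegral_mono_on (payoff_integrableOn hg hgm hρ.1 hρ.2.1 hρ.2.2.1 z)
      hρ.2.2.1 measurableSet_Ioi
    intro t _
    nlinarith [(hg (z.1 t)).1, (hg (z.1 t)).2, hρ.2.1 t]
  rw [hρ.2.2.2] at h; exact h

theorem avePayoff_bdd (hg : ∀ ω, g ω ∈ Icc (0:ℝ) 1)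
    (hgm : ∀ z ∈ K, Measurable fun t => g (z t)) {ρ : ℝ → ℝ}
    (hρ : IsDensity ρ) : ∃ M, ∀ z : K, |avePayoff K g ρ z| ≤ M :=
  ⟨1, fun z => abs_le.2 ⟨by linarith [avePayoff_nonneg hg hρ.2.1 z],
    avePayoff_le_one hg hgm hρ z⟩⟩

theorem avePayoff_congr {ρ σ : ℝ → ℝ} (h : ∀ t ∈ Ioi (0:ℝ), ρ t = σ t) :
    avePayoff K g ρ = avePayoff K g σ := by
  funext z
  exact setIntegral_congr_fun measurableSet_Ioi (fun t ht => by
    show ρ t * g (z.1 t) = σ t * g (z.1 t); rw [h t ht])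

theorem gval_congr (Vmap : GameMap Ω K) {ρ σ : ℝ → ℝ} (h : ∀ t ∈ Ioi (0:ℝ), ρ t = σ t) :
    gval Vmap g ρ = gval Vmap g σ := by
  unfold gval; rw [avePayoff_congr h]

theorem payoff_dist (hg : ∀ ω, g ω ∈ Icc (0:ℝ) 1)
    (hgm : ∀ z ∈ K, Measurable fun t => g (z t)) {ρ σ : ℝ → ℝ}
    (hρ : IsDensity ρ) (hσ : IsDensity σ) (z : K) :
    |avePayoff K g ρ z - avePayoff K g σ z| ≤ ∫ t in Ioi (0:ℝ), |ρ t - σ t| := by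
  have hiρ := payoff_integrableOn hg hgm hρ.1 hρ.2.1 hρ.2.2.1 z
  have hiσ := payoff_integrableOn hg hgm hσ.1 hσ.2.1 hσ.2.2.1 z
  have he : avePayoff K g ρ z - avePayoff K g σ z
      = ∫ t in Ioi (0:ℝ), (ρ t * g (z.1 t) - σ t * g (z.1 t)) := (integral_sub hiρ hiσ).symm
  rw [he]
  have h1 : |∫ t in Ioi (0:ℝ), (ρ t * g (z.1 t) - σ t * g (z.1 t))|
      ≤ ∫ t in Ioi (0:ℝ), |ρ t * g (z.1 t) - σ t * g (z.1 t)| := by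
    simpa [Real.norm_eq_abs] using norm_integral_le_integral_norm
      (μ := volume.restrict (Ioi 0)) (fun t => ρ t * g (z.1 t) - σ t * g (z.1 t))
  refine h1.trans ?_
  apply setIntegral_mono_on ((hiρ.sub hiσ).abs) ((hρ.2.2.1.sub hσ.2.2.1).abs) measurableSet_Ioi
  intro t _
  show |ρ t * g (z.1 t) - σ t * g (z.1 t)| ≤ |ρ t - σ t|
  have he2 : ρ t * g (z.1 t) - σ t * g (z.1 t) = (ρ t - σ t) * g (z.1 t) := by ring
  rw [he2, abs_mul]
  have hgabs : |g (z.1 t)| ≤ 1 := abs_le.2 ⟨by linarith [(hg (z.1 t)).1], (hg (z.1 t)).2⟩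
  exact mul_le_of_le_one_right (abs_nonneg _) hgabs

theorem gval_mem (Vmap : GameMap Ω K) (hg : ∀ ω, g ω ∈ Icc (0:ℝ) 1)
    (hgm : ∀ z ∈ K, Measurable fun t => g (z t)) {ρ : ℝ → ℝ}
    (hρ : IsDensity ρ) (ω : Ω) : gval Vmap g ρ ω ∈ Icc (0:ℝ) 1 :=
  vbound Vmap (avePayoff_nonneg hg hρ.2.1) (avePayoff_le_one hg hgm hρ) ω

theorem gval_dist (Vmap : GameMap Ω K) (hg : ∀ ω, g ω ∈ Icc (0:ℝ) 1)
    (hgm : ∀ z ∈ K, Measurable fun t => g (z t)) {ρ σ : ℝ → ℝ}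
    (hρ : IsDensity ρ) (hσ : IsDensity σ) (ω : Ω) :
    |gval Vmap g ρ ω - gval Vmap g σ ω| ≤ ∫ t in Ioi (0:ℝ), |ρ t - σ t| :=
  vnonexp Vmap (avePayoff_bdd hg hgm hρ) (avePayoff_bdd hg hgm hσ)
    (payoff_dist hg hgm hρ hσ) ω

end AbelCesaro

namespace AbelCesaro

open MeasureTheory Set Filter Topology

/-! ### Translation and splitting of integrals -/

private theorem indicator_shift_eq (f : ℝ → ℝ) (T : ℝ) :
    (Ioi T).indicator (fun t => f (t - T)) = fun t => (Ioi (0:ℝ)).indicator f (t - T) := by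
  funext t
  by_cases h : t ∈ Ioi T
  · rw [indicator_of_mem h, indicator_of_mem (by simpa [mem_Ioi, sub_pos] using h)]
  · rw [indicator_of_notMem h, indicator_of_notMem (by simpa [mem_Ioi, sub_pos] using h)]

theorem integral_shift (f : ℝ → ℝ) (T : ℝ) :
    ∫ t in Ioi T, f (t - T) = ∫ t in Ioi (0:ℝ), f t := by
  rw [← integral_indicator measurableSet_Ioi, ← integral_indicator measurableSet_Ioi,
    indicator_shift_eq f T]
  exact integral_sub_right_eq_self ((Ioi (0:ℝ)).indicator f) T

theorem integrableOn_shift {f : ℝ → ℝ} (hf : IntegrableOn f (Ioi 0)) (T : ℝ) :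
    IntegrableOn (fun t => f (t - T)) (Ioi T) := by
  rw [← integrable_indicator_iff measurableSet_Ioi] at hf ⊢
  rw [indicator_shift_eq f T]
  exact hf.comp_sub_right T

theorem integral_Ioi_split (f : ℝ → ℝ) {a b : ℝ} (hab : a ≤ b)
    (hf : IntegrableOn f (Ioi a)) :
    ∫ t in Ioi a, f t = (∫ t in Ioc a b, f t) + ∫ t in Ioi b, f t := by
  rw [← Ioc_union_Ioi_eq_Ioi hab] at hf ⊢
  rw [setIntegral_union (Ioc_disjoint_Ioi le_rfl) measurableSet_Ioi
    (hf.mono_set subset_union_left) (hf.mono_set subset_union_right)]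

/-! ### The exponential density -/

theorem measurable_expD (l : ℝ) : Measurable (expD l) := by
  unfold expD; fun_prop

theorem expD_nonneg {l : ℝ} (hl : 0 < l) (t : ℝ) : 0 ≤ expD l t :=
  mul_nonneg hl.le (Real.exp_pos _).le

theorem expD_integrableOn_Ioi {l : ℝ} (hl : 0 < l) (a : ℝ) :
    IntegrableOn (expD l) (Ioi a) := by
  have h := (exp_neg_integrableOn_Ioi a hl).const_mul l
  unfold expD
  simp only [neg_mul] at h
  exact h

theorem integral_expD_Ioi {l : ℝ} (hl : 0 < l) (a : ℝ) :
    ∫ t in Ioi a, expD l t = Real.exp (-(l * a)) := by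
  have h : ∫ t in Ioi a, Real.exp (-(l * t)) = l⁻¹ * Real.exp (-(l*a)) := by
    have h2 := integral_comp_mul_left_Ioi (fun u => Real.exp (-u)) a hl
    rw [integral_exp_neg_Ioi] at h2
    simpa [smul_eq_mul] using h2
  calc ∫ t in Ioi a, expD l t = ∫ t in Ioi a, l * Real.exp (-(l*t)) := rfl
    _ = l * ∫ t in Ioi a, Real.exp (-(l*t)) := by rw [integral_const_mul]
    _ = Real.exp (-(l*a)) := by rw [h]; field_simp

theorem isDensity_expD {l : ℝ} (hl : 0 < l) : IsDensity (expD l) := by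
  refine ⟨measurable_expD l, expD_nonneg hl, expD_integrableOn_Ioi hl 0, ?_⟩
  rw [integral_expD_Ioi hl 0]; simp

theorem integral_expD_Ioc {l : ℝ} (hl : 0 < l) {H : ℝ} (hH : 0 ≤ H) :
    ∫ t in Ioc (0:ℝ) H, expD l t = 1 - Real.exp (-(l * H)) := by
  have h := integral_Ioi_split (expD l) hH (expD_integrableOn_Ioi hl 0)
  rw [integral_expD_Ioi hl 0, integral_expD_Ioi hl H] at h
  simp only [mul_zero, neg_zero, Real.exp_zero] at h
  linarith

theorem shiftD_expD {l : ℝ} (hl : 0 < l) (T : ℝ) : shiftD (expD l) T = expD l := by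
  funext t
  unfold shiftD
  rw [integral_expD_Ioi hl T]
  unfold expD
  rw [show -(l*(t+T)) = -(l*t) + -(l*T) by ring, Real.exp_add]
  field_simp

/-! ### The uniform density -/

theorem unifD_eq_indicator (T : ℝ) : unifD T = (Icc (0:ℝ) T).indicator (fun _ => 1/T) := by
  funext t; simp [unifD, indicator_apply]

theorem measurable_unifD (T : ℝ) : Measurable (unifD T) := by
  rw [unifD_eq_indicator]
  exact measurable_const.indicator measurableSet_Icc

theorem unifD_nonneg {T : ℝ} (hT : 0 < T) (t : ℝ) : 0 ≤ unifD T t := by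
  unfold unifD; split
  · positivity
  · exact le_rfl

theorem integrableOn_unifD (T : ℝ) (s : Set ℝ) : IntegrableOn (unifD T) s := by
  rw [unifD_eq_indicator]
  apply Integrable.integrableOn
  rw [integrable_indicator_iff measurableSet_Icc]
  exact integrableOn_const measure_Icc_lt_top.ne

theorem integral_unifD_Ioi {T H : ℝ} (hH : 0 ≤ H) (hHT : H ≤ T) :
    ∫ t in Ioi H, unifD T t = (T - H) / T := by
  rw [unifD_eq_indicator, setIntegral_indicator measurableSet_Icc]
  have hs : Ioi H ∩ Icc 0 T = Ioc H T := by
    ext t; simp only [mem_inter_iff, mem_Ioi, mem_Icc, mem_Ioc]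
    constructor
    · rintro ⟨h1, _, h3⟩; exact ⟨h1, h3⟩
    · rintro ⟨h1, h2⟩; exact ⟨h1, le_trans hH h1.le, h2⟩
  rw [hs, setIntegral_const, Real.volume_real_Ioc_of_le hHT,
    smul_eq_mul]
  ring

theorem isDensity_unifD {T : ℝ} (hT : 0 < T) : IsDensity (unifD T) := by
  refine ⟨measurable_unifD T, unifD_nonneg hT, integrableOn_unifD T _, ?_⟩
  rw [integral_unifD_Ioi le_rfl hT.le]
  field_simp
  ring

theorem shiftD_unifD {S L : ℝ} (hL : 0 < L) (hLS : L < S) {t : ℝ} (ht : 0 < t) :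
    shiftD (unifD S) L t = unifD (S - L) t := by
  have hS : 0 < S := hL.trans hLS
  unfold shiftD
  rw [integral_unifD_Ioi hL.le hLS.le]
  unfold unifD
  by_cases h : t ≤ S - L
  · rw [if_pos (mem_Icc.2 ⟨by linarith, by linarith⟩), if_pos (mem_Icc.2 ⟨ht.le, h⟩)]
    field_simp
  · rw [if_neg (fun hc => h (by have := (mem_Icc.1 hc).2; linarith)),
      if_neg (fun hc => h (mem_Icc.1 hc).2)]
    exact zero_div _

/-! ### Glued densities -/

def glue (h : ℝ → ℝ) (T β : ℝ) (σ : ℝ → ℝ) : ℝ → ℝ :=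
  fun t => if t ≤ T then h t else β * σ (t - T)

variable {h σ : ℝ → ℝ} {T β : ℝ}

theorem glue_measurable (hh : Measurable h) (hσm : Measurable σ) :
    Measurable (glue h T β σ) := by
  unfold glue
  exact Measurable.ite measurableSet_Iic hh
    ((hσm.comp (measurable_id.sub measurable_const)).const_mul β)

theorem glue_nonneg (hh : ∀ t, 0 ≤ h t) (hσn : ∀ t, 0 ≤ σ t) (hβ : 0 ≤ β) (t : ℝ) :
    0 ≤ glue h T β σ t := by
  unfold glue; split
  · exact hh t
  · exact mul_nonneg hβ (hσn _)

theorem glue_integral_head (z : ℝ → ℝ) :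
    ∫ t in Ioc (0:ℝ) T, glue h T β σ t * z t = ∫ t in Ioc (0:ℝ) T, h t * z t :=
  setIntegral_congr_fun measurableSet_Ioc (fun t ht => by
    show glue h T β σ t * z t = h t * z t
    unfold glue; rw [if_pos ht.2])

theorem glue_integral_head' :
    ∫ t in Ioc (0:ℝ) T, glue h T β σ t = ∫ t in Ioc (0:ℝ) T, h t :=
  setIntegral_congr_fun measurableSet_Ioc (fun t ht => by
    show glue h T β σ t = h t
    unfold glue; rw [if_pos ht.2])

theorem glue_integrableOn_tail (hσi : IntegrableOn σ (Ioi 0)) (hβ : β ≠ 0 ∨ True := Or.inr trivial) :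
    IntegrableOn (glue h T β σ) (Ioi T) := by
  have h1 : IntegrableOn (fun t => β * σ (t - T)) (Ioi T) :=
    (integrableOn_shift hσi T).const_mul β
  apply h1.congr_fun ?_ measurableSet_Ioi
  intro t ht
  show β * σ (t - T) = glue h T β σ t
  unfold glue; rw [if_neg (not_le.2 ht)]

theorem glue_integral_tail (hσd : IsDensity σ) :
    ∫ t in Ioi T, glue h T β σ t = β := by
  rw [setIntegral_congr_fun measurableSet_Ioi
    (g := fun t => β * σ (t - T)) (fun t ht => by
      show glue h T β σ t = β * σ (t - T)
      unfold glue; rw [if_neg (not_le.2 ht)])]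
  rw [integral_const_mul, integral_shift σ T, hσd.2.2.2, mul_one]

theorem glue_integrableOn (hT : 0 < T) (hi : IntegrableOn h (Ioc 0 T))
    (hσi : IntegrableOn σ (Ioi 0)) : IntegrableOn (glue h T β σ) (Ioi 0) := by
  rw [← Ioc_union_Ioi_eq_Ioi hT.le]
  apply IntegrableOn.union ?_ (glue_integrableOn_tail hσi (Or.inr trivial))
  apply hi.congr_fun ?_ measurableSet_Ioc
  intro t ht
  show h t = glue h T β σ t
  unfold glue; rw [if_pos ht.2]

theorem isDensity_glue (hT : 0 < T) (hβ0 : 0 ≤ β) (hhm : Measurable h)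
    (hhn : ∀ t, 0 ≤ h t) (hi : IntegrableOn h (Ioc 0 T))
    (hmass : (∫ t in Ioc (0:ℝ) T, h t) = 1 - β) (hσd : IsDensity σ) :
    IsDensity (glue h T β σ) := by
  refine ⟨glue_measurable hhm hσd.1, glue_nonneg hhn hσd.2.1 hβ0,
    glue_integrableOn hT hi hσd.2.2.1, ?_⟩
  rw [integral_Ioi_split _ hT.le (glue_integrableOn hT hi hσd.2.2.1),
    glue_integral_head', hmass, glue_integral_tail hσd]
  ring

theorem glue_shift (hβ : 0 < β) (hσd : IsDensity σ) {t : ℝ} (ht : t ∈ Ioi (0:ℝ)) :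
    shiftD (glue h T β σ) T t = σ t := by
  have ht' : (0:ℝ) < t := ht
  unfold shiftD
  rw [glue_integral_tail hσd]
  rw [show glue h T β σ (t + T) = β * σ (t + T - T) from by
    unfold glue; rw [if_neg (by intro hc; linarith)]]
  rw [add_sub_cancel_right]
  field_simp

end AbelCesaro

namespace AbelCesaro

open MeasureTheory Set Filter Topology

variable {Ω : Type*} {K : Set (ℝ → Ω)}

/-- A density built from `n` glued blocks, each with tail weight `β` and a head whose
one-step Bellman operator almost fixes `U` (up to `κ`). -/
def Built (Vmap : GameMap Ω K) (g U : Ω → ℝ) (β κ : ℝ) : ℕ → (ℝ → ℝ) → Prop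
  | 0, ρ => IsDensity ρ
  | n+1, ρ => ∃ hd T σ, 0 < T ∧ Measurable hd ∧ (∀ t, 0 ≤ hd t) ∧
      IntegrableOn hd (Ioc 0 T) ∧ ((∫ t in Ioc (0:ℝ) T, hd t) = 1 - β) ∧
      (∀ ω, |Vmap.V (fun z => (∫ t in Ioc (0:ℝ) T, hd t * g (z.1 t)) + β * U (z.1 T)) ω
        - U ω| ≤ κ) ∧
      Built Vmap g U β κ n σ ∧ ρ = glue hd T β σ

theorem built_isDensity {Vmap : GameMap Ω K} {g U : Ω → ℝ} {β κ : ℝ}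
    (hβ0 : 0 ≤ β) : ∀ n ρ, Built Vmap g U β κ n ρ → IsDensity ρ := by
  intro n
  induction n with
  | zero => exact fun ρ h => h
  | succ n ih =>
    rintro ρ ⟨hd, T, σ, hT, hm, hn, hi, hmass, _, hb, rfl⟩
    exact isDensity_glue hT hβ0 hm hn hi hmass (ih σ hb)

theorem chain {Vmap : GameMap Ω K} {g U : Ω → ℝ} {β κ : ℝ}
    (hg : ∀ ω, g ω ∈ Icc (0:ℝ) 1) (hgm : ∀ z ∈ K, Measurable fun t => g (z t))
    (hU : ∀ ω, U ω ∈ Icc (0:ℝ) 1) (hdpp : DPP Vmap g)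
    (hβ0 : 0 < β) (hβ1 : β < 1) (hκ : 0 ≤ κ) :
    ∀ n ρ, Built Vmap g U β κ n ρ → ∀ ω,
      |gval Vmap g ρ ω - U ω| ≤ κ * (∑ j ∈ Finset.range n, β ^ j) + β ^ n := by
  intro n
  induction n with
  | zero =>
    intro ρ hρ ω
    simp only [Finset.range_zero, Finset.sum_empty, mul_zero, zero_add, pow_zero]
    have h1 := gval_mem Vmap hg hgm hρ ω
    have h2 := hU ω
    rw [abs_le]
    constructor <;> [linarith [h1.1, h2.2]; linarith [h1.2, h2.1]]
  | succ n ih =>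
    rintro ρ ⟨hd, T, σ, hT, hm, hn, hi, hmass, hbell, hb, rfl⟩ ω
    have hσd : IsDensity σ := built_isDensity hβ0.le n σ hb
    have hρd : IsDensity (glue hd T β σ) := isDensity_glue hT hβ0.le hm hn hi hmass hσd
    have htail : (∫ t in Ioi T, glue hd T β σ t) = β := glue_integral_tail hσd
    have hdppEq := hdpp (glue hd T β σ) hρd T hT (by rw [htail]; exact hβ0)
    have hshift : gval Vmap g (shiftD (glue hd T β σ) T) = gval Vmap g σ :=
      gval_congr Vmap (fun t ht => glue_shift hβ0 hσd ht)
    set R := κ * (∑ j ∈ Finset.range n, β ^ j) + β ^ n with hR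
    have hRnn : 0 ≤ R := by
      have : (0:ℝ) ≤ ∑ j ∈ Finset.range n, β ^ j :=
        Finset.sum_nonneg fun j _ => pow_nonneg hβ0.le j
      positivity
    have hIH := ih σ hb
    -- head payoff bounds
    have hheadnn : ∀ z : K, 0 ≤ ∫ t in Ioc (0:ℝ) T, hd t * g (z.1 t) := fun z =>
      setIntegral_nonneg measurableSet_Ioc fun t _ => mul_nonneg (hn t) (hg _).1
    have hheadle : ∀ z : K, (∫ t in Ioc (0:ℝ) T, hd t * g (z.1 t)) ≤ 1 - β := by
      intro z
      have h1 : (∫ t in Ioc (0:ℝ) T, hd t * g (z.1 t)) ≤ ∫ t in Ioc (0:ℝ) T, hd t := by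
        apply setIntegral_mono_on (payoff_integrableOn hg hgm hm hn hi z) hi
          measurableSet_Ioc
        intro t _
        show hd t * g (z.1 t) ≤ hd t
        nlinarith [(hg (z.1 t)).1, (hg (z.1 t)).2, hn t]
      rw [hmass] at h1; exact h1
    -- the two payoffs
    set bell : K → ℝ := fun z =>
      (∫ t in Ioc (0:ℝ) T, hd t * g (z.1 t)) + β * U (z.1 T) with hbelld
    have hdppP : ∀ z : K, dppPayoff Vmap g (glue hd T β σ) T z =
        (∫ t in Ioc (0:ℝ) T, hd t * g (z.1 t)) + β * gval Vmap g σ (z.1 T) := by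
      intro z
      unfold dppPayoff
      rw [htail, hshift, glue_integral_head]
    have hdiff : ∀ z : K, |dppPayoff Vmap g (glue hd T β σ) T z - bell z| ≤ β * R := by
      intro z
      rw [hdppP z]
      have : (∫ t in Ioc (0:ℝ) T, hd t * g (z.1 t)) + β * gval Vmap g σ (z.1 T) - bell z
          = β * (gval Vmap g σ (z.1 T) - U (z.1 T)) := by
        rw [hbelld]; ring
      rw [this, abs_mul, abs_of_nonneg hβ0.le]
      exact mul_le_mul_of_nonneg_left (hIH (z.1 T)) hβ0.le
    have hbd1 : ∃ M, ∀ z : K, |dppPayoff Vmap g (glue hd T β σ) T z| ≤ M := by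
      refine ⟨2, fun z => ?_⟩
      rw [hdppP z]
      have hg1 := (gval_mem Vmap hg hgm hσd (z.1 T)).1
      have hg2 := (gval_mem Vmap hg hgm hσd (z.1 T)).2
      have h1 := hheadnn z; have h2 := hheadle z
      rw [abs_le]
      constructor <;> nlinarith [mul_nonneg hβ0.le hg1, mul_le_mul_of_nonneg_left hg2 hβ0.le]
    have hbd2 : ∃ M, ∀ z : K, |bell z| ≤ M := by
      refine ⟨2, fun z => ?_⟩
      have hU1 := (hU (z.1 T)).1; have hU2 := (hU (z.1 T)).2
      have h1 := hheadnn z; have h2 := hheadle z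
      show |(∫ t in Ioc (0:ℝ) T, hd t * g (z.1 t)) + β * U (z.1 T)| ≤ 2
      rw [abs_le]
      constructor <;> nlinarith [mul_nonneg hβ0.le hU1, mul_le_mul_of_nonneg_left hU2 hβ0.le]
    have hne := vnonexp Vmap hbd1 hbd2 hdiff ω
    have hgv : gval Vmap g (glue hd T β σ) ω = Vmap.V (dppPayoff Vmap g (glue hd T β σ) T) ω := by
      unfold gval
      rw [hdppEq]
    have hb2 := hbell ω
    have : |gval Vmap g (glue hd T β σ) ω - U ω| ≤ β * R + κ := by
      rw [hgv]
      calc |Vmap.V (dppPayoff Vmap g (glue hd T β σ) T) ω - U ω|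
          ≤ |Vmap.V (dppPayoff Vmap g (glue hd T β σ) T) ω - Vmap.V bell ω|
            + |Vmap.V bell ω - U ω| := abs_sub_le _ _ _
        _ ≤ β * R + κ := add_le_add hne hb2
    refine this.trans (le_of_eq ?_)
    rw [hR, geom_sum_succ]
    ring

end AbelCesaro

namespace AbelCesaro

open MeasureTheory Set Filter Topology

variable {Ω : Type*} {K : Set (ℝ → Ω)}

/-- One-block Bellman estimate from the exponential values. -/
theorem bellE {Vmap : GameMap Ω K} {g U : Ω → ℝ}
    (hg : ∀ ω, g ω ∈ Icc (0:ℝ) 1) (hgm : ∀ z ∈ K, Measurable fun t => g (z t))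
    (hU : ∀ ω, U ω ∈ Icc (0:ℝ) 1)
    (hdpp : DPP Vmap g) {l H ε : ℝ} (hl : 0 < l) (hH : 0 < H) (hε : 0 ≤ ε)
    (hconv : ∀ ω, |gval Vmap g (expD l) ω - U ω| ≤ ε) :
    ∀ ω, |Vmap.V (fun z => (∫ t in Ioc (0:ℝ) H, expD l t * g (z.1 t))
      + Real.exp (-(l*H)) * U (z.1 H)) ω - U ω| ≤ 2*ε := by
  intro ω
  have hden := isDensity_expD hl
  have htail := integral_expD_Ioi hl H
  have hdpp' := hdpp (expD l) hden H hH (by rw [htail]; exact Real.exp_pos _)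
  have hshift : gval Vmap g (shiftD (expD l) H) = gval Vmap g (expD l) := by
    rw [shiftD_expD hl]
  set bell : K → ℝ := fun z => (∫ t in Ioc (0:ℝ) H, expD l t * g (z.1 t))
      + Real.exp (-(l*H)) * U (z.1 H) with hbelld
  have hdppP : ∀ z : K, dppPayoff Vmap g (expD l) H z =
      (∫ t in Ioc (0:ℝ) H, expD l t * g (z.1 t))
        + Real.exp (-(l*H)) * gval Vmap g (expD l) (z.1 H) := by
    intro z
    unfold dppPayoff
    rw [htail, hshift]
  have hheadnn : ∀ z : K, 0 ≤ ∫ t in Ioc (0:ℝ) H, expD l t * g (z.1 t) := fun z =>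
    setIntegral_nonneg measurableSet_Ioc fun t _ => mul_nonneg (expD_nonneg hl t) (hg _).1
  have hheadle : ∀ z : K, (∫ t in Ioc (0:ℝ) H, expD l t * g (z.1 t)) ≤ 1 := by
    intro z
    have h1 : (∫ t in Ioc (0:ℝ) H, expD l t * g (z.1 t)) ≤ ∫ t in Ioc (0:ℝ) H, expD l t := by
      apply setIntegral_mono_on
        (payoff_integrableOn hg hgm (measurable_expD l) (expD_nonneg hl)
          ((expD_integrableOn_Ioi hl 0).mono_set Ioc_subset_Ioi_self) z)
        ((expD_integrableOn_Ioi hl 0).mono_set Ioc_subset_Ioi_self) measurableSet_Ioc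
      intro t _
      show expD l t * g (z.1 t) ≤ expD l t
      nlinarith [(hg (z.1 t)).1, (hg (z.1 t)).2, expD_nonneg hl t]
    rw [integral_expD_Ioc hl hH.le] at h1
    have := (Real.exp_pos (-(l*H))).le
    linarith
  have hexple : Real.exp (-(l*H)) ≤ 1 := Real.exp_le_one_iff.2 (by nlinarith)
  have hexppos := (Real.exp_pos (-(l*H))).le
  have hdiff : ∀ z : K, |dppPayoff Vmap g (expD l) H z - bell z| ≤ ε := by
    intro z
    rw [hdppP z]
    have he : (∫ t in Ioc (0:ℝ) H, expD l t * g (z.1 t))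
        + Real.exp (-(l*H)) * gval Vmap g (expD l) (z.1 H) - bell z
        = Real.exp (-(l*H)) * (gval Vmap g (expD l) (z.1 H) - U (z.1 H)) := by
      rw [hbelld]; ring
    rw [he, abs_mul, abs_of_nonneg hexppos]
    calc Real.exp (-(l*H)) * |gval Vmap g (expD l) (z.1 H) - U (z.1 H)|
        ≤ 1 * ε := mul_le_mul hexple (hconv (z.1 H)) (abs_nonneg _) zero_le_one
      _ = ε := one_mul ε
  have hbd1 : ∃ M, ∀ z : K, |dppPayoff Vmap g (expD l) H z| ≤ M := by
    refine ⟨2, fun z => ?_⟩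
    rw [hdppP z]
    have hg1 := (gval_mem Vmap hg hgm hden (z.1 H)).1
    have hg2 := (gval_mem Vmap hg hgm hden (z.1 H)).2
    have h1 := hheadnn z; have h2 := hheadle z
    rw [abs_le]
    constructor <;> nlinarith [mul_nonneg hexppos hg1,
      mul_le_mul hexple hg2 hg1 zero_le_one]
  have hbd2 : ∃ M, ∀ z : K, |bell z| ≤ M := by
    refine ⟨2, fun z => ?_⟩
    show |(∫ t in Ioc (0:ℝ) H, expD l t * g (z.1 t)) + Real.exp (-(l*H)) * U (z.1 H)| ≤ 2
    have h1 := hheadnn z; have h2 := hheadle z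
    have hU1 := (hU (z.1 H)).1; have hU2 := (hU (z.1 H)).2
    rw [abs_le]
    constructor <;> nlinarith [mul_nonneg hexppos hU1,
      mul_le_mul hexple hU2 hU1 zero_le_one]
  have hne := vnonexp Vmap hbd2 hbd1 (fun z => by
    rw [abs_sub_comm]; exact hdiff z) ω
  have hv : Vmap.V (dppPayoff Vmap g (expD l) H) ω = gval Vmap g (expD l) ω := by
    unfold gval; rw [hdpp']
  calc |Vmap.V bell ω - U ω|
      ≤ |Vmap.V bell ω - Vmap.V (dppPayoff Vmap g (expD l) H) ω|
        + |Vmap.V (dppPayoff Vmap g (expD l) H) ω - U ω| := abs_sub_le _ _ _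
    _ ≤ ε + ε := by
        apply add_le_add hne
        rw [hv]; exact hconv ω
    _ = 2*ε := by ring

/-- One-block Bellman estimate from the uniform values. -/
theorem bellU {Vmap : GameMap Ω K} {g U : Ω → ℝ}
    (hg : ∀ ω, g ω ∈ Icc (0:ℝ) 1) (hgm : ∀ z ∈ K, Measurable fun t => g (z t))
    (hU : ∀ ω, U ω ∈ Icc (0:ℝ) 1)
    (hdpp : DPP Vmap g) {L S ε M : ℝ} (hL : 0 < L) (hLS : L < S)
    (hSM : M ≤ S) (hSLM : M ≤ S - L) (hε : 0 ≤ ε)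
    (hconv : ∀ T, M ≤ T → ∀ ω, |gval Vmap g (unifD T) ω - U ω| ≤ ε) :
    ∀ ω, |Vmap.V (fun z => (∫ t in Ioc (0:ℝ) L, (1/S) * g (z.1 t))
      + ((S-L)/S) * U (z.1 L)) ω - U ω| ≤ 2*ε := by
  intro ω
  have hS : 0 < S := hL.trans hLS
  have hSL : 0 < S - L := by linarith
  have hden := isDensity_unifD hS
  have htail : (∫ t in Ioi L, unifD S t) = (S-L)/S := integral_unifD_Ioi hL.le hLS.le
  have hdpp' := hdpp (unifD S) hden L hL (by rw [htail]; positivity)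
  have hshift : gval Vmap g (shiftD (unifD S) L) = gval Vmap g (unifD (S - L)) :=
    gval_congr Vmap (fun t ht => shiftD_unifD hL hLS ht)
  have hhead : ∀ z : K, (∫ t in Ioc (0:ℝ) L, unifD S t * g (z.1 t))
      = ∫ t in Ioc (0:ℝ) L, (1/S) * g (z.1 t) := by
    intro z
    apply setIntegral_congr_fun measurableSet_Ioc
    intro t ht
    show unifD S t * g (z.1 t) = (1/S) * g (z.1 t)
    unfold unifD
    rw [if_pos (mem_Icc.2 ⟨ht.1.le, le_trans ht.2 hLS.le⟩)]
  set bell : K → ℝ := fun z => (∫ t in Ioc (0:ℝ) L, (1/S) * g (z.1 t))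
      + ((S-L)/S) * U (z.1 L) with hbelld
  have hdppP : ∀ z : K, dppPayoff Vmap g (unifD S) L z =
      (∫ t in Ioc (0:ℝ) L, (1/S) * g (z.1 t))
        + ((S-L)/S) * gval Vmap g (unifD (S-L)) (z.1 L) := by
    intro z
    unfold dppPayoff
    rw [htail, hshift, hhead z]
  have hco : 0 ≤ (S-L)/S := by positivity
  have hco1 : (S-L)/S ≤ 1 := by
    rw [div_le_one hS]; linarith
  have hheadnn : ∀ z : K, 0 ≤ ∫ t in Ioc (0:ℝ) L, (1/S) * g (z.1 t) := fun z =>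
    setIntegral_nonneg measurableSet_Ioc fun t _ =>
      mul_nonneg (by positivity) (hg _).1
  have hheadle : ∀ z : K, (∫ t in Ioc (0:ℝ) L, (1/S) * g (z.1 t)) ≤ 1 := by
    intro z
    have hi : IntegrableOn (fun _ => (1:ℝ)/S) (Ioc (0:ℝ) L) :=
      integrableOn_const measure_Ioc_lt_top.ne
    have h1 : (∫ t in Ioc (0:ℝ) L, (1/S) * g (z.1 t)) ≤ ∫ t in Ioc (0:ℝ) L, (1/S) := by
      apply setIntegral_mono_on
        (payoff_integrableOn hg hgm measurable_const (fun t => by positivity) hi z)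
        hi measurableSet_Ioc
      intro t _
      show (1/S) * g (z.1 t) ≤ 1/S
      exact mul_le_of_le_one_right (by positivity) (hg (z.1 t)).2
    rw [setIntegral_const, Real.volume_real_Ioc_of_le hL.le, smul_eq_mul] at h1
    calc (∫ t in Ioc (0:ℝ) L, (1/S) * g (z.1 t)) ≤ (L - 0) * (1/S) := h1
      _ ≤ 1 := by rw [sub_zero, mul_one_div, div_le_one hS]; linarith
  have hdiff : ∀ z : K, |dppPayoff Vmap g (unifD S) L z - bell z| ≤ ε := by
    intro z
    rw [hdppP z]
    have he : (∫ t in Ioc (0:ℝ) L, (1/S) * g (z.1 t))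
        + ((S-L)/S) * gval Vmap g (unifD (S-L)) (z.1 L) - bell z
        = ((S-L)/S) * (gval Vmap g (unifD (S-L)) (z.1 L) - U (z.1 L)) := by
      rw [hbelld]; ring
    rw [he, abs_mul, abs_of_nonneg hco]
    calc ((S-L)/S) * |gval Vmap g (unifD (S-L)) (z.1 L) - U (z.1 L)|
        ≤ 1 * ε := mul_le_mul hco1 (hconv (S-L) hSLM (z.1 L)) (abs_nonneg _) zero_le_one
      _ = ε := one_mul ε
  have hbd1 : ∃ M', ∀ z : K, |dppPayoff Vmap g (unifD S) L z| ≤ M' := by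
    refine ⟨2, fun z => ?_⟩
    rw [hdppP z]
    have hg1 := (gval_mem Vmap hg hgm (isDensity_unifD hSL) (z.1 L)).1
    have hg2 := (gval_mem Vmap hg hgm (isDensity_unifD hSL) (z.1 L)).2
    have h1 := hheadnn z; have h2 := hheadle z
    rw [abs_le]
    constructor <;> nlinarith [mul_nonneg hco hg1, mul_le_mul hco1 hg2 hg1 zero_le_one]
  have hbd2 : ∃ M', ∀ z : K, |bell z| ≤ M' := by
    refine ⟨2, fun z => ?_⟩
    show |(∫ t in Ioc (0:ℝ) L, (1/S) * g (z.1 t)) + ((S-L)/S) * U (z.1 L)| ≤ 2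
    have h1 := hheadnn z; have h2 := hheadle z
    have hU1 := (hU (z.1 L)).1; have hU2 := (hU (z.1 L)).2
    rw [abs_le]
    constructor <;> nlinarith [mul_nonneg hco hU1, mul_le_mul hco1 hU2 hU1 zero_le_one]
  have hne := vnonexp Vmap hbd2 hbd1 (fun z => by
    rw [abs_sub_comm]; exact hdiff z) ω
  have hv : Vmap.V (dppPayoff Vmap g (unifD S) L) ω = gval Vmap g (unifD S) ω := by
    unfold gval; rw [hdpp']
  calc |Vmap.V bell ω - U ω|
      ≤ |Vmap.V bell ω - Vmap.V (dppPayoff Vmap g (unifD S) L) ω|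
        + |Vmap.V (dppPayoff Vmap g (unifD S) L) ω - U ω| := abs_sub_le _ _ _
    _ ≤ ε + ε := by
        apply add_le_add hne
        rw [hv]; exact hconv S hSM ω
    _ = 2*ε := by ring

end AbelCesaro

namespace AbelCesaro

open MeasureTheory Set Filter Topology

variable {Ω : Type*} {K : Set (ℝ → Ω)}

/-! ### Elementary exponential inequalities -/

theorem exp_neg_lb (θ : ℝ) : 1 - θ ≤ Real.exp (-θ) := by
  have := Real.add_one_le_exp (-θ); linarith

theorem exp_prod (θ : ℝ) : Real.exp θ * Real.exp (-θ) = 1 := by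
  rw [← Real.exp_add]; simp

theorem exp_mul_lb {θ : ℝ} (hθ : 0 ≤ θ) : θ * Real.exp (-θ) ≤ 1 - Real.exp (-θ) := by
  have h := Real.add_one_le_exp θ
  have hp := exp_prod θ
  have hβ := (Real.exp_pos (-θ)).le
  nlinarith

theorem half_le_one_sub_exp {θ : ℝ} (h0 : 0 ≤ θ) (h1 : θ ≤ 1) :
    θ/2 ≤ 1 - Real.exp (-θ) := by
  have h := Real.add_one_le_exp θ
  have hp := exp_prod θ
  have hβ := (Real.exp_pos (-θ)).le
  -- (1+θ) * exp(-θ) ≤ 1 and (1+θ)(1-θ/2) ≥ 1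
  have h2 : (1+θ) * Real.exp (-θ) ≤ 1 := by nlinarith
  nlinarith

/-! ### The two block constructions -/

/-- Piecewise-uniform approximation of the exponential density `expD l`:
`n` uniform blocks of length `θ/l`, with geometric weights, followed by an
exponential tail. -/
noncomputable def nuU (θ l : ℝ) : ℕ → ℝ → ℝ
  | 0 => expD l
  | n+1 => glue (fun _ => (1 - Real.exp (-θ)) / (θ/l)) (θ/l) (Real.exp (-θ)) (nuU θ l n)

/-- Piecewise-exponential approximation of the uniform density `unifD T`:
`n` truncated-exponential blocks of geometrically shrinking lengths, followed by a
uniform tail. -/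
noncomputable def nuE (θ : ℝ) : ℕ → ℝ → ℝ → ℝ
  | 0, T => unifD T
  | n+1, T => glue (expD (θ / (T * (1 - Real.exp (-θ))))) (T * (1 - Real.exp (-θ)))
      (Real.exp (-θ)) (nuE θ n (T * Real.exp (-θ)))

theorem isDensity_nuU {θ l : ℝ} (hθ0 : 0 < θ) (hl : 0 < l) :
    ∀ n, IsDensity (nuU θ l n) := by
  intro n
  induction n with
  | zero => exact isDensity_expD hl
  | succ n ih =>
    have hβ0 : 0 < Real.exp (-θ) := Real.exp_pos _
    have hβ1 : Real.exp (-θ) < 1 := by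
      rw [Real.exp_lt_one_iff]; linarith
    have hL : 0 < θ/l := by positivity
    have h1β : 0 < 1 - Real.exp (-θ) := by linarith
    refine isDensity_glue hL hβ0.le measurable_const
      (fun t => by positivity)
      (integrableOn_const measure_Ioc_lt_top.ne) ?_ ih
    rw [setIntegral_const, Real.volume_real_Ioc_of_le hL.le, smul_eq_mul]
    field_simp
    ring

theorem isDensity_nuE {θ : ℝ} (hθ0 : 0 < θ) :
    ∀ n T, 0 < T → IsDensity (nuE θ n T) := by
  intro n
  induction n with
  | zero => exact fun T hT => isDensity_unifD hT
  | succ n ih =>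
    intro T hT
    have hβ0 : 0 < Real.exp (-θ) := Real.exp_pos _
    have hβ1 : Real.exp (-θ) < 1 := by rw [Real.exp_lt_one_iff]; linarith
    have h1β : 0 < 1 - Real.exp (-θ) := by linarith
    have hT₀ : 0 < T * (1 - Real.exp (-θ)) := by positivity
    have hl : 0 < θ / (T * (1 - Real.exp (-θ))) := by positivity
    refine isDensity_glue hT₀ hβ0.le (measurable_expD _) (expD_nonneg hl)
      ((expD_integrableOn_Ioi hl 0).mono_set Ioc_subset_Ioi_self) ?_
      (ih (T * Real.exp (-θ)) (by positivity))
    rw [integral_expD_Ioc hl hT₀.le]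
    rw [show θ / (T * (1 - Real.exp (-θ))) * (T * (1 - Real.exp (-θ))) = θ from by
      field_simp]

theorem built_nuU {Vmap : GameMap Ω K} {g U : Ω → ℝ}
    (hg : ∀ ω, g ω ∈ Icc (0:ℝ) 1) (hgm : ∀ z ∈ K, Measurable fun t => g (z t))
    (hU : ∀ ω, U ω ∈ Icc (0:ℝ) 1) (hdpp : DPP Vmap g) {θ l ε M : ℝ}
    (hθ0 : 0 < θ) (hl : 0 < l) (hε : 0 ≤ ε)
    (hSM : M ≤ (θ/l)/(1 - Real.exp (-θ)))
    (hSLM : M ≤ (θ/l)/(1 - Real.exp (-θ)) - θ/l)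
    (hconv : ∀ T, M ≤ T → ∀ ω, |gval Vmap g (unifD T) ω - U ω| ≤ ε) :
    ∀ n, Built Vmap g U (Real.exp (-θ)) (2*ε) n (nuU θ l n) := by
  intro n
  induction n with
  | zero => exact isDensity_expD hl
  | succ n ih =>
    have hβ0 : 0 < Real.exp (-θ) := Real.exp_pos _
    have hβ1 : Real.exp (-θ) < 1 := by rw [Real.exp_lt_one_iff]; linarith
    have h1β : 0 < 1 - Real.exp (-θ) := by linarith
    have hL : 0 < θ/l := by positivity
    have hLS : θ/l < (θ/l)/(1 - Real.exp (-θ)) := by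
      rw [lt_div_iff₀ h1β]; nlinarith
    refine ⟨fun _ => (1 - Real.exp (-θ)) / (θ/l), θ/l, nuU θ l n, hL, measurable_const,
      (fun t => by positivity),
      integrableOn_const measure_Ioc_lt_top.ne, ?_, ?_, ih, rfl⟩
    · rw [setIntegral_const, Real.volume_real_Ioc_of_le hL.le, smul_eq_mul]
      field_simp
      ring
    · have hb := bellU hg hgm hU hdpp hL hLS hSM hSLM hε hconv
      have e1 : (1:ℝ)/((θ/l)/(1 - Real.exp (-θ))) = (1 - Real.exp (-θ)) / (θ/l) := by
        field_simp
      have e2 : ((θ/l)/(1 - Real.exp (-θ)) - θ/l)/((θ/l)/(1 - Real.exp (-θ)))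
          = Real.exp (-θ) := by
        field_simp
        ring
      intro ω
      have hbω := hb ω
      rw [e1, e2] at hbω
      exact hbω

theorem built_nuE {Vmap : GameMap Ω K} {g U : Ω → ℝ}
    (hg : ∀ ω, g ω ∈ Icc (0:ℝ) 1) (hgm : ∀ z ∈ K, Measurable fun t => g (z t))
    (hU : ∀ ω, U ω ∈ Icc (0:ℝ) 1) (hdpp : DPP Vmap g) {θ ε lam : ℝ}
    (hθ0 : 0 < θ) (hε : 0 ≤ ε) (hlam : 0 < lam)
    (hconv : ∀ l, 0 < l → l ≤ lam → ∀ ω, |gval Vmap g (expD l) ω - U ω| ≤ ε) :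
    ∀ n T, 0 < T → θ ≤ lam * (T * (1 - Real.exp (-θ))) * (Real.exp (-θ))^n →
    Built Vmap g U (Real.exp (-θ)) (2*ε) n (nuE θ n T) := by
  intro n
  induction n with
  | zero => exact fun T hT _ => isDensity_unifD hT
  | succ n ih =>
    intro T hT hcond
    have hβ0 : 0 < Real.exp (-θ) := Real.exp_pos _
    have hβ1 : Real.exp (-θ) < 1 := by rw [Real.exp_lt_one_iff]; linarith
    have h1β : 0 < 1 - Real.exp (-θ) := by linarith
    have hT₀ : 0 < T * (1 - Real.exp (-θ)) := by positivity
    have hl : 0 < θ / (T * (1 - Real.exp (-θ))) := by positivity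
    have hlT₀ : θ / (T * (1 - Real.exp (-θ))) * (T * (1 - Real.exp (-θ))) = θ := by
      field_simp
    have hllam : θ / (T * (1 - Real.exp (-θ))) ≤ lam := by
      rw [div_le_iff₀ hT₀]
      have hβn : (Real.exp (-θ))^(n+1) ≤ 1 := pow_le_one₀ hβ0.le hβ1.le
      calc θ ≤ lam * (T * (1 - Real.exp (-θ))) * (Real.exp (-θ))^(n+1) := hcond
        _ ≤ lam * (T * (1 - Real.exp (-θ))) * 1 := by
            apply mul_le_mul_of_nonneg_left hβn (by positivity)
        _ = lam * (T * (1 - Real.exp (-θ))) := mul_one _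
    refine ⟨expD (θ / (T * (1 - Real.exp (-θ)))), T * (1 - Real.exp (-θ)),
      nuE θ n (T * Real.exp (-θ)), hT₀, measurable_expD _, expD_nonneg hl,
      (expD_integrableOn_Ioi hl 0).mono_set Ioc_subset_Ioi_self, ?_, ?_, ?_, rfl⟩
    · rw [integral_expD_Ioc hl hT₀.le, hlT₀]
    · have hb := bellE hg hgm hU hdpp hl hT₀ hε (hconv _ hl hllam)
      intro ω
      have hbω := hb ω
      rw [hlT₀] at hbω
      exact hbω
    · apply ih (T * Real.exp (-θ)) (by positivity)
      calc θ ≤ lam * (T * (1 - Real.exp (-θ))) * (Real.exp (-θ))^(n+1) := hcond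
        _ = lam * (T * Real.exp (-θ) * (1 - Real.exp (-θ))) * (Real.exp (-θ))^n := by
            ring

end AbelCesaro

namespace AbelCesaro

open MeasureTheory Set Filter Topology

/-! ### L¹ estimates for the block constructions -/

theorem L1_nuU {θ l : ℝ} (hθ0 : 0 < θ) (hθ1 : θ ≤ 1) (hl : 0 < l) :
    ∀ n, (∫ t in Ioi (0:ℝ), |nuU θ l n t - expD l t|) ≤ 2*θ := by
  intro n
  induction n with
  | zero =>
    simp only [nuU, sub_self, abs_zero, integral_zero]
    positivity
  | succ n ih =>
    have hβ0 : 0 < Real.exp (-θ) := Real.exp_pos _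
    have hβ1 : Real.exp (-θ) < 1 := by rw [Real.exp_lt_one_iff]; linarith
    have h1β : 0 < 1 - Real.exp (-θ) := by linarith
    have hL : 0 < θ/l := by positivity
    have hdn1 : IsDensity (nuU θ l (n+1)) := isDensity_nuU hθ0 hl (n+1)
    have hde : IsDensity (expD l) := isDensity_expD hl
    have hint : IntegrableOn (fun t => |nuU θ l (n+1) t - expD l t|) (Ioi 0) :=
      (hdn1.2.2.1.sub hde.2.2.1).abs
    rw [integral_Ioi_split _ hL.le hint]
    have hhead : (∫ t in Ioc (0:ℝ) (θ/l), |nuU θ l (n+1) t - expD l t|)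
        ≤ θ * (1 - Real.exp (-θ)) := by
      have hptw : ∀ t ∈ Ioc (0:ℝ) (θ/l), |nuU θ l (n+1) t - expD l t|
          ≤ l * (1 - Real.exp (-θ)) := by
        intro t ht
        have hval : nuU θ l (n+1) t = (1 - Real.exp (-θ))/(θ/l) := by
          simp only [nuU]; unfold glue; rw [if_pos ht.2]
        have hqd : (1 - Real.exp (-θ))/(θ/l) = l * (1 - Real.exp (-θ)) / θ := by
          field_simp
        have h1 : l * Real.exp (-θ) ≤ (1 - Real.exp (-θ))/(θ/l) := by
          rw [hqd, le_div_iff₀ hθ0]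
          nlinarith [exp_mul_lb hθ0.le]
        have h2 : (1 - Real.exp (-θ))/(θ/l) ≤ l := by
          rw [hqd, div_le_iff₀ hθ0]
          nlinarith [exp_neg_lb θ]
        have hlt : l * t ≤ θ := by
          have := ht.2
          rw [le_div_iff₀ hl] at this
          linarith [this]
        have h3 : l * Real.exp (-θ) ≤ expD l t := by
          unfold expD
          exact mul_le_mul_of_nonneg_left (Real.exp_le_exp.2 (by linarith)) hl.le
        have h4 : expD l t ≤ l := by
          unfold expD
          calc l * Real.exp (-(l*t)) ≤ l * 1 := by
                apply mul_le_mul_of_nonneg_left ?_ hl.le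
                rw [Real.exp_le_one_iff]
                nlinarith [ht.1]
            _ = l := mul_one l
        rw [hval, abs_le]
        constructor <;> nlinarith
      have hc : IntegrableOn (fun _ : ℝ => l * (1 - Real.exp (-θ))) (Ioc (0:ℝ) (θ/l)) :=
        integrableOn_const measure_Ioc_lt_top.ne
      calc (∫ t in Ioc (0:ℝ) (θ/l), |nuU θ l (n+1) t - expD l t|)
          ≤ ∫ _t in Ioc (0:ℝ) (θ/l), l * (1 - Real.exp (-θ)) :=
            setIntegral_mono_on (hint.mono_set Ioc_subset_Ioi_self) hc
              measurableSet_Ioc hptw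
        _ = θ * (1 - Real.exp (-θ)) := by
            rw [setIntegral_const, Real.volume_real_Ioc_of_le hL.le, smul_eq_mul]
            field_simp
            ring
    have hlL : l * (θ/l) = θ := by field_simp
    have htail : (∫ t in Ioi (θ/l), |nuU θ l (n+1) t - expD l t|)
        ≤ Real.exp (-θ) * (2*θ) := by
      have heq : ∀ t ∈ Ioi (θ/l), |nuU θ l (n+1) t - expD l t|
          = (fun s => Real.exp (-θ) * |nuU θ l n s - expD l s|) (t - θ/l) := by
        intro t ht
        have ht' : θ/l < t := ht
        show |nuU θ l (n+1) t - expD l t|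
          = Real.exp (-θ) * |nuU θ l n (t - θ/l) - expD l (t - θ/l)|
        have h1 : nuU θ l (n+1) t = Real.exp (-θ) * nuU θ l n (t - θ/l) := by
          simp only [nuU]; unfold glue; rw [if_neg (not_le.2 ht')]
        have h2 : expD l t = Real.exp (-θ) * expD l (t - θ/l) := by
          unfold expD
          have harg : l*(t - θ/l) = l*t - θ := by field_simp
          rw [show -(l*t) = -θ + -(l*(t - θ/l)) from by rw [harg]; ring]
          rw [Real.exp_add]; ring
        rw [h1, h2, show Real.exp (-θ) * nuU θ l n (t - θ/l)
            - Real.exp (-θ) * expD l (t - θ/l)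
            = Real.exp (-θ) * (nuU θ l n (t - θ/l) - expD l (t - θ/l)) from by ring,
          abs_mul, abs_of_nonneg hβ0.le]
      calc (∫ t in Ioi (θ/l), |nuU θ l (n+1) t - expD l t|)
          = ∫ s in Ioi (0:ℝ), Real.exp (-θ) * |nuU θ l n s - expD l s| :=
            (setIntegral_congr_fun measurableSet_Ioi heq).trans
              (integral_shift (fun s => Real.exp (-θ) * |nuU θ l n s - expD l s|) (θ/l))
        _ = Real.exp (-θ) * ∫ s in Ioi (0:ℝ), |nuU θ l n s - expD l s| :=
            integral_const_mul _ _
        _ ≤ Real.exp (-θ) * (2*θ) := mul_le_mul_of_nonneg_left ih hβ0.le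
    nlinarith [hβ1.le]

theorem L1_nuE {θ : ℝ} (hθ0 : 0 < θ) (hθ1 : θ ≤ 1) :
    ∀ n T, 0 < T → (∫ t in Ioi (0:ℝ), |nuE θ n T t - unifD T t|) ≤ 2*θ := by
  intro n
  induction n with
  | zero =>
    intro T hT
    simp only [nuE, sub_self, abs_zero, integral_zero]
    positivity
  | succ n ih =>
    intro T hT
    have hβ0 : 0 < Real.exp (-θ) := Real.exp_pos _
    have hβ1 : Real.exp (-θ) < 1 := by rw [Real.exp_lt_one_iff]; linarith
    have h1β : 0 < 1 - Real.exp (-θ) := by linarith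
    have hT₀ : 0 < T * (1 - Real.exp (-θ)) := by positivity
    have hl : 0 < θ / (T * (1 - Real.exp (-θ))) := by positivity
    have hlT₀ : θ / (T * (1 - Real.exp (-θ))) * (T * (1 - Real.exp (-θ))) = θ := by
      field_simp
    have hTT : T * (1 - Real.exp (-θ)) + T * Real.exp (-θ) = T := by ring
    have hdn1 : IsDensity (nuE θ (n+1) T) := isDensity_nuE hθ0 (n+1) T hT
    have hdu : IsDensity (unifD T) := isDensity_unifD hT
    have hint : IntegrableOn (fun t => |nuE θ (n+1) T t - unifD T t|) (Ioi 0) :=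
      (hdn1.2.2.1.sub hdu.2.2.1).abs
    rw [integral_Ioi_split _ hT₀.le hint]
    have hhead : (∫ t in Ioc (0:ℝ) (T * (1 - Real.exp (-θ))), |nuE θ (n+1) T t - unifD T t|)
        ≤ θ * (1 - Real.exp (-θ)) := by
      have hptw : ∀ t ∈ Ioc (0:ℝ) (T * (1 - Real.exp (-θ))), |nuE θ (n+1) T t - unifD T t|
          ≤ θ / (T * (1 - Real.exp (-θ))) * (1 - Real.exp (-θ)) := by
        intro t ht
        set l := θ / (T * (1 - Real.exp (-θ))) with hld
        have hval : nuE θ (n+1) T t = expD l t := by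
          simp only [nuE]; unfold glue; rw [if_pos ht.2]
        have huval : unifD T t = 1/T := by
          unfold unifD
          rw [if_pos (mem_Icc.2 ⟨ht.1.le, le_trans ht.2 (by nlinarith [hβ0.le])⟩)]
        have h1 : l * Real.exp (-θ) ≤ 1/T := by
          rw [hld, div_mul_eq_mul_div, div_le_div_iff₀ hT₀ hT]
          nlinarith [exp_mul_lb hθ0.le]
        have h2 : (1:ℝ)/T ≤ l := by
          rw [hld, div_le_div_iff₀ hT hT₀]
          nlinarith [exp_neg_lb θ]
        have hlt : l * t ≤ θ := by
          have h5 := ht.2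
          calc l * t ≤ l * (T * (1 - Real.exp (-θ))) :=
                mul_le_mul_of_nonneg_left h5 hl.le
            _ = θ := hlT₀
        have h3 : l * Real.exp (-θ) ≤ expD l t := by
          unfold expD
          exact mul_le_mul_of_nonneg_left (Real.exp_le_exp.2 (by linarith)) hl.le
        have h4 : expD l t ≤ l := by
          unfold expD
          calc l * Real.exp (-(l*t)) ≤ l * 1 := by
                apply mul_le_mul_of_nonneg_left ?_ hl.le
                rw [Real.exp_le_one_iff]
                nlinarith [ht.1]
            _ = l := mul_one l
        rw [hval, huval, abs_le]
        constructor <;> nlinarith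
      have hc : IntegrableOn
          (fun _ : ℝ => θ / (T * (1 - Real.exp (-θ))) * (1 - Real.exp (-θ)))
          (Ioc (0:ℝ) (T * (1 - Real.exp (-θ)))) :=
        integrableOn_const measure_Ioc_lt_top.ne
      calc (∫ t in Ioc (0:ℝ) (T * (1 - Real.exp (-θ))), |nuE θ (n+1) T t - unifD T t|)
          ≤ ∫ _t in Ioc (0:ℝ) (T * (1 - Real.exp (-θ))),
              θ / (T * (1 - Real.exp (-θ))) * (1 - Real.exp (-θ)) :=
            setIntegral_mono_on (hint.mono_set Ioc_subset_Ioi_self) hc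
              measurableSet_Ioc hptw
        _ = θ * (1 - Real.exp (-θ)) := by
            rw [setIntegral_const, Real.volume_real_Ioc_of_le hT₀.le, smul_eq_mul, sub_zero]
            field_simp
    have htail : (∫ t in Ioi (T * (1 - Real.exp (-θ))), |nuE θ (n+1) T t - unifD T t|)
        ≤ Real.exp (-θ) * (2*θ) := by
      have heq : ∀ t ∈ Ioi (T * (1 - Real.exp (-θ))), |nuE θ (n+1) T t - unifD T t|
          = (fun s => Real.exp (-θ) * |nuE θ n (T * Real.exp (-θ)) s
              - unifD (T * Real.exp (-θ)) s|) (t - T * (1 - Real.exp (-θ))) := by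
        intro t ht
        have ht' : T * (1 - Real.exp (-θ)) < t := ht
        show |nuE θ (n+1) T t - unifD T t|
          = Real.exp (-θ) * |nuE θ n (T * Real.exp (-θ)) (t - T * (1 - Real.exp (-θ)))
              - unifD (T * Real.exp (-θ)) (t - T * (1 - Real.exp (-θ)))|
        have h1 : nuE θ (n+1) T t
            = Real.exp (-θ) * nuE θ n (T * Real.exp (-θ)) (t - T * (1 - Real.exp (-θ))) := by
          simp only [nuE]; unfold glue; rw [if_neg (not_le.2 ht')]
        have h2 : unifD T t
            = Real.exp (-θ) * unifD (T * Real.exp (-θ)) (t - T * (1 - Real.exp (-θ))) := by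
          unfold unifD
          by_cases hle : t ≤ T
          · rw [if_pos (mem_Icc.2 ⟨by nlinarith, hle⟩),
              if_pos (mem_Icc.2 ⟨by linarith, by linarith⟩)]
            rw [mul_one_div]
            rw [div_eq_div_iff hT.ne' (by positivity)]
            ring
          · rw [if_neg (fun hc' => hle (mem_Icc.1 hc').2),
              if_neg (fun hc' => hle (by linarith [(mem_Icc.1 hc').2]))]
            ring
        rw [h1, h2, show Real.exp (-θ) * nuE θ n (T * Real.exp (-θ)) (t - T * (1 - Real.exp (-θ)))
            - Real.exp (-θ) * unifD (T * Real.exp (-θ)) (t - T * (1 - Real.exp (-θ)))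
            = Real.exp (-θ) * (nuE θ n (T * Real.exp (-θ)) (t - T * (1 - Real.exp (-θ)))
              - unifD (T * Real.exp (-θ)) (t - T * (1 - Real.exp (-θ)))) from by ring,
          abs_mul, abs_of_nonneg hβ0.le]
      calc (∫ t in Ioi (T * (1 - Real.exp (-θ))), |nuE θ (n+1) T t - unifD T t|)
          = ∫ s in Ioi (0:ℝ), Real.exp (-θ) * |nuE θ n (T * Real.exp (-θ)) s
              - unifD (T * Real.exp (-θ)) s| :=
            (setIntegral_congr_fun measurableSet_Ioi heq).trans
              (integral_shift (fun s => Real.exp (-θ) * |nuE θ n (T * Real.exp (-θ)) s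
                - unifD (T * Real.exp (-θ)) s|) (T * (1 - Real.exp (-θ))))
        _ = Real.exp (-θ) * ∫ s in Ioi (0:ℝ), |nuE θ n (T * Real.exp (-θ)) s
              - unifD (T * Real.exp (-θ)) s| := integral_const_mul _ _
        _ ≤ Real.exp (-θ) * (2*θ) :=
            mul_le_mul_of_nonneg_left (ih (T * Real.exp (-θ)) (by positivity)) hβ0.le
    nlinarith [hβ1.le]

end AbelCesaro

namespace AbelCesaro

open MeasureTheory Set Filter Topology

variable {Ω : Type*} {K : Set (ℝ → Ω)}

theorem geom_sum_le_inv {β : ℝ} (hβ0 : 0 < β) (hβ1 : β < 1) (n : ℕ) :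
    (∑ j ∈ Finset.range n, β ^ j) ≤ 1/(1-β) := by
  have h1β : 0 < 1 - β := by linarith
  rw [geom_sum_eq hβ1.ne n]
  have h1n : 1 - β^n ≤ 1 := by nlinarith [pow_pos hβ0 n]
  calc (β^n - 1)/(β-1) = (1 - β^n)/(1-β) := by
        rw [← neg_sub 1 (β^n), ← neg_sub 1 β, neg_div_neg_eq]
    _ ≤ 1/(1-β) := by gcongr

theorem condE_to_condU (g : Ω → ℝ) (hg : ∀ ω, g ω ∈ Icc (0:ℝ) 1)
    (hgm : ∀ z ∈ K, Measurable fun t => g (z t))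
    (Vmap : GameMap Ω K) (hdpp : DPP Vmap g)
    (U : Ω → ℝ) (hU : ∀ ω, U ω ∈ Icc (0:ℝ) 1)
    (hE : CondE (gval Vmap g) U) : CondU (gval Vmap g) U := by
  intro ε' hε'
  set θ := min 1 (ε'/6) with hθd
  have hθ0 : 0 < θ := lt_min one_pos (by linarith)
  have hθ1 : θ ≤ 1 := min_le_left _ _
  have hθ6 : θ ≤ ε'/6 := min_le_right _ _
  have hε0 : 0 < ε' * θ / 12 := by positivity
  obtain ⟨lam, hlammem, hlam⟩ :=
    mem_nhdsGT_iff_exists_Ioc_subset.1 (hE (ε' * θ / 12) hε0)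
  have hlam0 : 0 < lam := hlammem
  set β := Real.exp (-θ) with hβd
  have hβ0 : 0 < β := Real.exp_pos _
  have hβ1 : β < 1 := by rw [hβd, Real.exp_lt_one_iff]; linarith
  have h1β : 0 < 1 - β := by linarith
  obtain ⟨n, hn⟩ := exists_pow_lt_of_lt_one (show (0:ℝ) < ε'/3 by linarith) hβ1
  rw [eventually_atTop]
  refine ⟨max 1 (θ / (lam * (1 - β) * β^n)), fun T hT => ?_⟩
  have hT1 : (1:ℝ) ≤ T := le_trans (le_max_left _ _) hT
  have hT0 : 0 < T := by linarith
  have hpow : 0 < β ^ n := pow_pos hβ0 n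
  have hden : 0 < lam * (1 - β) * β^n := by positivity
  have hTc : θ / (lam * (1 - β) * β^n) ≤ T := le_trans (le_max_right _ _) hT
  have hcond : θ ≤ lam * (T * (1 - β)) * β^n := by
    rw [div_le_iff₀ hden] at hTc
    calc θ ≤ T * (lam * (1-β) * β^n) := hTc
      _ = lam * (T * (1-β)) * β^n := by ring
  have hconv : ∀ l, 0 < l → l ≤ lam → ∀ ω,
      |gval Vmap g (expD l) ω - U ω| ≤ ε' * θ / 12 :=
    fun l h1 h2 ω => hlam (mem_Ioc.2 ⟨h1, h2⟩) ω
  have hbuilt := built_nuE hg hgm hU hdpp hθ0 hε0.le hlam0 hconv n T hT0 hcond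
  have hchain := chain hg hgm hU hdpp hβ0 hβ1 (by positivity) n (nuE θ n T) hbuilt
  intro ω
  have hL1 := L1_nuE hθ0 hθ1 n T hT0
  have hdE : IsDensity (nuE θ n T) := isDensity_nuE hθ0 n T hT0
  have hdist := gval_dist Vmap hg hgm (isDensity_unifD hT0) hdE ω
  have hflip : (∫ t in Ioi (0:ℝ), |unifD T t - nuE θ n T t|)
      = ∫ t in Ioi (0:ℝ), |nuE θ n T t - unifD T t| :=
    setIntegral_congr_fun measurableSet_Ioi (fun t _ => abs_sub_comm _ _)
  have hsum0 : (0:ℝ) ≤ ∑ j ∈ Finset.range n, β ^ j :=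
    Finset.sum_nonneg fun j _ => pow_nonneg hβ0.le j
  have h2θ : 1/(1-β) ≤ 2/θ := by
    rw [div_le_div_iff₀ h1β hθ0]
    nlinarith [half_le_one_sub_exp hθ0.le hθ1]
  have h12 : 2 * (ε' * θ / 12) * (∑ j ∈ Finset.range n, β ^ j) ≤ ε'/3 := by
    calc 2 * (ε' * θ / 12) * (∑ j ∈ Finset.range n, β ^ j)
        ≤ 2 * (ε' * θ / 12) * (1/(1-β)) :=
          mul_le_mul_of_nonneg_left (geom_sum_le_inv hβ0 hβ1 n) (by positivity)
      _ ≤ 2 * (ε' * θ / 12) * (2/θ) :=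
          mul_le_mul_of_nonneg_left h2θ (by positivity)
      _ = ε'/3 := by field_simp; ring
  calc |gval Vmap g (unifD T) ω - U ω|
      ≤ |gval Vmap g (unifD T) ω - gval Vmap g (nuE θ n T) ω|
        + |gval Vmap g (nuE θ n T) ω - U ω| := abs_sub_le _ _ _
    _ ≤ 2*θ + (2 * (ε' * θ / 12) * (∑ j ∈ Finset.range n, β ^ j) + β^n) := by
        apply add_le_add ?_ (hchain ω)
        calc |gval Vmap g (unifD T) ω - gval Vmap g (nuE θ n T) ω|
            ≤ ∫ t in Ioi (0:ℝ), |unifD T t - nuE θ n T t| := hdist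
          _ = ∫ t in Ioi (0:ℝ), |nuE θ n T t - unifD T t| := hflip
          _ ≤ 2*θ := hL1
    _ ≤ ε'/3 + (ε'/3 + ε'/3) := by
        apply add_le_add (by linarith) (add_le_add h12 hn.le)
    _ ≤ ε' := by linarith

theorem condU_to_condE (g : Ω → ℝ) (hg : ∀ ω, g ω ∈ Icc (0:ℝ) 1)
    (hgm : ∀ z ∈ K, Measurable fun t => g (z t))
    (Vmap : GameMap Ω K) (hdpp : DPP Vmap g)
    (U : Ω → ℝ) (hU : ∀ ω, U ω ∈ Icc (0:ℝ) 1)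
    (hUc : CondU (gval Vmap g) U) : CondE (gval Vmap g) U := by
  intro ε' hε'
  set θ := min 1 (ε'/6) with hθd
  have hθ0 : 0 < θ := lt_min one_pos (by linarith)
  have hθ1 : θ ≤ 1 := min_le_left _ _
  have hθ6 : θ ≤ ε'/6 := min_le_right _ _
  have hε0 : 0 < ε' * θ / 12 := by positivity
  obtain ⟨M, hM⟩ := eventually_atTop.1 (hUc (ε' * θ / 12) hε0)
  have hM'0 : (0:ℝ) < max M 1 := lt_of_lt_of_le one_pos (le_max_right _ _)
  have hMconv : ∀ T, max M 1 ≤ T → ∀ ω,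
      |gval Vmap g (unifD T) ω - U ω| ≤ ε' * θ / 12 :=
    fun T hT => hM T (le_trans (le_max_left _ _) hT)
  set β := Real.exp (-θ) with hβd
  have hβ0 : 0 < β := Real.exp_pos _
  have hβ1 : β < 1 := by rw [hβd, Real.exp_lt_one_iff]; linarith
  have h1β : 0 < 1 - β := by linarith
  have hβ3 : 1/3 ≤ β := by
    have h1 : Real.exp (-1) ≤ β := by
      rw [hβd]; exact Real.exp_le_exp.2 (by linarith)
    have h2 : Real.exp 1 ≤ 3 := by
      have := Real.exp_one_lt_d9
      linarith
    have h3 : Real.exp 1 * Real.exp (-1) = 1 := exp_prod 1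
    have h4 : 0 < Real.exp (-1) := Real.exp_pos _
    nlinarith
  obtain ⟨n, hn⟩ := exists_pow_lt_of_lt_one (show (0:ℝ) < ε'/3 by linarith) hβ1
  have hδ0 : 0 < θ/(3 * max M 1) := by positivity
  have hIoo : Ioo (0:ℝ) (θ/(3 * max M 1)) ∈ 𝓝[>] (0:ℝ) :=
    Ioo_mem_nhdsGT_of_mem ⟨le_rfl, hδ0⟩
  filter_upwards [hIoo] with l hl
  obtain ⟨hl0, hlδ⟩ := hl
  have hL : 0 < θ/l := by positivity
  have hM'leθ : max M 1 ≤ θ/(3*l) := by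
    rw [le_div_iff₀ (by positivity)]
    rw [lt_div_iff₀ (by positivity)] at hlδ
    nlinarith
  have hSL : max M 1 ≤ (θ/l)/(1 - β) - θ/l := by
    have hkey : (1:ℝ)/(1-β) - 1 = β/(1-β) := by
      rw [div_sub_one h1β.ne']
      congr 1
      ring
    have h2 : (1:ℝ)/3 ≤ β/(1-β) := by
      rw [div_le_div_iff₀ (by norm_num : (0:ℝ) < 3) h1β]
      nlinarith
    calc max M 1 ≤ θ/(3*l) := hM'leθ
      _ = (θ/l) * (1/3) := by ring
      _ ≤ (θ/l) * (β/(1-β)) := mul_le_mul_of_nonneg_left h2 hL.le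
      _ = (θ/l) * (1/(1-β) - 1) := by rw [hkey]
      _ = (θ/l)/(1 - β) - θ/l := by ring
  have hS : max M 1 ≤ (θ/l)/(1 - β) := by
    have : (0:ℝ) < θ/l := hL
    calc max M 1 ≤ (θ/l)/(1 - β) - θ/l := hSL
      _ ≤ (θ/l)/(1 - β) := by linarith
  have hbuilt := built_nuU hg hgm hU hdpp hθ0 hl0 hε0.le hS hSL hMconv n
  have hchain := chain hg hgm hU hdpp hβ0 hβ1 (by positivity) n (nuU θ l n) hbuilt
  intro ω
  have hL1 := L1_nuU hθ0 hθ1 hl0 n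
  have hdN : IsDensity (nuU θ l n) := isDensity_nuU hθ0 hl0 n
  have hdist := gval_dist Vmap hg hgm (isDensity_expD hl0) hdN ω
  have hflip : (∫ t in Ioi (0:ℝ), |expD l t - nuU θ l n t|)
      = ∫ t in Ioi (0:ℝ), |nuU θ l n t - expD l t| :=
    setIntegral_congr_fun measurableSet_Ioi (fun t _ => abs_sub_comm _ _)
  have hsum0 : (0:ℝ) ≤ ∑ j ∈ Finset.range n, β ^ j :=
    Finset.sum_nonneg fun j _ => pow_nonneg hβ0.le j
  have h2θ : 1/(1-β) ≤ 2/θ := by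
    rw [div_le_div_iff₀ h1β hθ0]
    nlinarith [half_le_one_sub_exp hθ0.le hθ1]
  have h12 : 2 * (ε' * θ / 12) * (∑ j ∈ Finset.range n, β ^ j) ≤ ε'/3 := by
    calc 2 * (ε' * θ / 12) * (∑ j ∈ Finset.range n, β ^ j)
        ≤ 2 * (ε' * θ / 12) * (1/(1-β)) :=
          mul_le_mul_of_nonneg_left (geom_sum_le_inv hβ0 hβ1 n) (by positivity)
      _ ≤ 2 * (ε' * θ / 12) * (2/θ) :=
          mul_le_mul_of_nonneg_left h2θ (by positivity)
      _ = ε'/3 := by field_simp; ring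
  calc |gval Vmap g (expD l) ω - U ω|
      ≤ |gval Vmap g (expD l) ω - gval Vmap g (nuU θ l n) ω|
        + |gval Vmap g (nuU θ l n) ω - U ω| := abs_sub_le _ _ _
    _ ≤ 2*θ + (2 * (ε' * θ / 12) * (∑ j ∈ Finset.range n, β ^ j) + β^n) := by
        apply add_le_add ?_ (hchain ω)
        calc |gval Vmap g (expD l) ω - gval Vmap g (nuU θ l n) ω|
            ≤ ∫ t in Ioi (0:ℝ), |expD l t - nuU θ l n t| := hdist
          _ = ∫ t in Ioi (0:ℝ), |nuU θ l n t - expD l t| := hflip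
          _ ≤ 2*θ := hL1
    _ ≤ ε'/3 + (ε'/3 + ε'/3) := by
        apply add_le_add (by linarith) (add_le_add h12 hn.le)
    _ ≤ ε' := by linarith

end AbelCesaro

/-- Abel–Cesàro equivalence: under the dynamic programming principle,
uniform convergence of the values for exponential densities as `λ → 0+` is equivalent
to uniform convergence of the values for uniform densities as `T → ∞`. -/
theorem abel_cesaro_equivalence {Ω : Type*} [Nonempty Ω] {K : Set (ℝ → Ω)}
    (hK : K.Nonempty) (g : Ω → ℝ) (hg : ∀ ω, g ω ∈ Icc (0 : ℝ) 1)
    (hgm : ∀ z ∈ K, Measurable fun t => g (z t))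
    (Vmap : GameMap Ω K) (hdpp : DPP Vmap g)
    (U : Ω → ℝ) (hU : ∀ ω, U ω ∈ Icc (0 : ℝ) 1) :
    CondE (gval Vmap g) U ↔ CondU (gval Vmap g) U := by
  exact ⟨AbelCesaro.condE_to_condU g hg hgm Vmap hdpp U hU,
    AbelCesaro.condU_to_condE g hg hgm Vmap hdpp U hU⟩
end
end

section
/- Let V be any game mapping, 𝒱[ϱ] = V[ĉ[ϱ]], U_* : Ω → [0,1], and let μ ∈ 𝔇 be a power density. Then limsup_{λ→0+} sup_{ω∈Ω} |𝒱[μ^λ_scale](ω) − U_*(ω)| = limsup_{T→+∞} sup_{ω∈Ω} |𝒱[μ^T_shift](ω) − U_*(ω)|. In particular, 𝒱[μ^λ_scale] → U_* uniformly on Ω as λ → 0+ if and only if 𝒱[μ^T_shift] → U_* uniformly on Ω as T → +∞. -/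
open MeasureTheory Set Filter Topology
open scoped ENNReal

noncomputable section

variable {Ω : Type*}

lemma aux_scale_eq_shift {μ : ℝ → ℝ} (hd : IsDensity μ)
    {α β γ : ℝ} (hα : 0 < α) (hβ : 0 < β)
    (hf : ∀ t, 0 ≤ t → μ t = (α + β * t) ^ (-γ))
    {T : ℝ} (hT : 0 < T) :
    Set.EqOn (scaleD μ (α / (α + β * T))) (shiftD μ T) (Ioi 0) := by
  have hD : 0 < α + β * T := by positivity
  set l : ℝ := α / (α + β * T) with hl
  have hlpos : 0 < l := div_pos hα hD
  set base : ℝ → ℝ := fun t => (α + β * T + β * t) ^ (-γ) with hbase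
  have hX : ∀ t : ℝ, 0 < t → 0 < α + β * T + β * t := fun t ht => by positivity
  -- pointwise formula for scaleD
  have step1 : ∀ t ∈ Ioi (0:ℝ), scaleD μ l t = l ^ (1 - γ) * base t := by
    intro t ht
    have ht' : (0:ℝ) < t := ht
    have h1 : μ (l * t) = (α + β * (l * t)) ^ (-γ) := hf _ (by positivity)
    have h2 : α + β * (l * t) = l * (α + β * T + β * t) := by
      rw [hl]; field_simp
    have h3 : (l * (α + β * T + β * t)) ^ (-γ)
        = l ^ (-γ) * (α + β * T + β * t) ^ (-γ) :=
      Real.mul_rpow hlpos.le (hX t ht').le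
    have h4 : l * l ^ (-γ) = l ^ (1 - γ) := by
      rw [sub_eq_add_neg, Real.rpow_add hlpos, Real.rpow_one]
    calc scaleD μ l t = l * μ (l * t) := rfl
      _ = l * (l ^ (-γ) * (α + β * T + β * t) ^ (-γ)) := by rw [h1, h2, h3]
      _ = l ^ (1 - γ) * base t := by rw [← mul_assoc, h4]
  -- pointwise formula for shiftD
  have step2 : ∀ t ∈ Ioi (0:ℝ), shiftD μ T t = base t / ∫ s in Ioi T, μ s := by
    intro t ht
    have ht' : (0:ℝ) < t := ht
    have h1 : μ (t + T) = base t := by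
      rw [hf _ (by positivity), hbase]; ring_nf
    simp only [shiftD, h1]
  -- translation identity
  have step3 : (∫ s in Ioi T, μ s) = ∫ t in Ioi (0:ℝ), base t := by
    have he : MeasurableEmbedding (fun x : ℝ => x + T) :=
      (Homeomorph.addRight T).measurableEmbedding
    have hpre : (fun x : ℝ => x + T) ⁻¹' (Ioi T) = Ioi 0 := by
      ext x; simp [lt_add_iff_pos_left]
    calc (∫ s in Ioi T, μ s)
        = ∫ s in Ioi T, μ s ∂(Measure.map (· + T) volume) := by
          rw [map_add_right_eq_self]
      _ = ∫ t in (fun x : ℝ => x + T) ⁻¹' (Ioi T), μ (t + T) :=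
          he.setIntegral_map μ (Ioi T)
      _ = ∫ t in Ioi (0:ℝ), μ (t + T) := by rw [hpre]
      _ = ∫ t in Ioi (0:ℝ), base t := by
          refine setIntegral_congr_fun measurableSet_Ioi fun t ht => ?_
          have ht' : (0:ℝ) < t := ht
          rw [hf _ (by positivity), hbase]; ring_nf
  -- total mass of scaleD is 1
  have step4 : (∫ t in Ioi (0:ℝ), scaleD μ l t) = 1 := by
    calc (∫ t in Ioi (0:ℝ), scaleD μ l t)
        = ∫ t in Ioi (0:ℝ), l * μ (l * t) := rfl
      _ = l * ∫ t in Ioi (0:ℝ), μ (l * t) := integral_const_mul l _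
      _ = l * (l⁻¹ • ∫ x in Ioi (l * 0), μ x) := by
          rw [integral_comp_mul_left_Ioi μ 0 hlpos]
      _ = 1 := by
          rw [mul_zero, hd.2.2.2, smul_eq_mul, mul_one, mul_inv_cancel₀ hlpos.ne']
  have step5 : (∫ t in Ioi (0:ℝ), scaleD μ l t)
      = l ^ (1 - γ) * ∫ t in Ioi (0:ℝ), base t := by
    rw [setIntegral_congr_fun measurableSet_Ioi step1, integral_const_mul]
  have hJ : (∫ t in Ioi (0:ℝ), base t) = (l ^ (1 - γ))⁻¹ := by
    have h : l ^ (1 - γ) * ∫ t in Ioi (0:ℝ), base t = 1 := by rw [← step5, step4]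
    exact eq_inv_of_mul_eq_one_left (by rw [mul_comm]; exact h)
  intro t ht
  rw [step1 t ht, step2 t ht, step3, hJ, div_eq_mul_inv, inv_inv, mul_comm]

lemma aux_map_scale_shift {α β : ℝ} (hα : 0 < α) (hβ : 0 < β) :
    Filter.map (fun T : ℝ => α / (α + β * T)) atTop = 𝓝[>] (0:ℝ) := by
  set m : ℝ → ℝ := fun T => α / (α + β * T) with hm
  set n : ℝ → ℝ := fun l => (α - α * l) * (β * l)⁻¹ with hn
  have hden : Tendsto (fun T : ℝ => α + β * T) atTop atTop :=
    tendsto_atTop_add_const_left _ α (tendsto_id.const_mul_atTop hβ)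
  have h1 : Tendsto m atTop (𝓝[>] (0:ℝ)) := by
    rw [tendsto_nhdsWithin_iff]
    refine ⟨hden.const_div_atTop α, ?_⟩
    filter_upwards [eventually_gt_atTop (0:ℝ)] with T hT
    exact div_pos hα (by positivity)
  have h2 : Tendsto n (𝓝[>] (0:ℝ)) atTop := by
    refine Filter.Tendsto.pos_mul_atTop hα ?_ ?_
    · have : Tendsto (fun l : ℝ => α - α * l) (𝓝 0) (𝓝 (α - α * 0)) :=
        (continuous_const.sub (continuous_const.mul continuous_id)).tendsto 0
      simpa using this.mono_left nhdsWithin_le_nhds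
    · refine tendsto_inv_nhdsGT_zero.comp ?_
      rw [tendsto_nhdsWithin_iff]
      constructor
      · have : Tendsto (fun l : ℝ => β * l) (𝓝 0) (𝓝 (β * 0)) :=
          (continuous_const.mul continuous_id).tendsto 0
        simpa using this.mono_left nhdsWithin_le_nhds
      · filter_upwards [self_mem_nhdsWithin] with l hl
        exact mul_pos hβ hl
  have h3 : ∀ᶠ l in 𝓝[>] (0:ℝ), m (n l) = l := by
    filter_upwards [self_mem_nhdsWithin] with l hl
    have hl' : (0:ℝ) < l := hl
    have hA : α + β * ((α - α * l) * (β * l)⁻¹) = α / l := by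
      field_simp
      ring
    simp only [hm, hn, hA]
    rw [div_div_eq_mul_div, mul_comm, mul_div_assoc, div_self hα.ne', mul_one]
  refine le_antisymm h1 ?_
  have e1 : Filter.map (m ∘ n) (𝓝[>] (0:ℝ)) = 𝓝[>] (0:ℝ) := by
    rw [Filter.map_congr (show (m ∘ n) =ᶠ[𝓝[>] (0:ℝ)] id from h3), Filter.map_id]
  calc 𝓝[>] (0:ℝ) = Filter.map m (Filter.map n (𝓝[>] (0:ℝ))) := by
        rw [Filter.map_map, e1]
    _ ≤ Filter.map m atTop := Filter.map_mono h2

/-- for a power density, the limsup of the uniform distance of the values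
to `U_*` under scaling as `λ → 0+` equals the one under shifting as `T → ∞`; in
particular the two uniform convergences are equivalent. -/
theorem power_density_scale_shift_limsup {Ω : Type*} [Nonempty Ω] {K : Set (ℝ → Ω)}
    (hK : K.Nonempty) (g : Ω → ℝ) (hg : ∀ ω, g ω ∈ Icc (0 : ℝ) 1)
    (hgm : ∀ z ∈ K, Measurable fun t => g (z t))
    (Vmap : GameMap Ω K) (U : Ω → ℝ) (hU : ∀ ω, U ω ∈ Icc (0 : ℝ) 1)
    (μ : ℝ → ℝ) (hμ : IsPowerDensity μ) :
    (Filter.limsup (fun l => ⨆ ω, |gval Vmap g (scaleD μ l) ω - U ω|) (𝓝[>] (0 : ℝ))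
      = Filter.limsup (fun T => ⨆ ω, |gval Vmap g (shiftD μ T) ω - U ω|)
          (atTop : Filter ℝ)) ∧
    ((∀ ε > (0 : ℝ), ∀ᶠ l in 𝓝[>] (0 : ℝ), ∀ ω, |gval Vmap g (scaleD μ l) ω - U ω| ≤ ε)
      ↔ (∀ ε > (0 : ℝ), ∀ᶠ T in (atTop : Filter ℝ), ∀ ω,
          |gval Vmap g (shiftD μ T) ω - U ω| ≤ ε)) := by
  obtain ⟨hd, α, β, γ, hα, hβ, hγ, hf⟩ := hμ
  set m : ℝ → ℝ := fun T => α / (α + β * T) with hm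
  have hmap : Filter.map m atTop = 𝓝[>] (0:ℝ) := aux_map_scale_shift hα hβ
  have hev : ∀ᶠ T in (atTop : Filter ℝ),
      gval Vmap g (scaleD μ (m T)) = gval Vmap g (shiftD μ T) := by
    filter_upwards [eventually_gt_atTop (0:ℝ)] with T hT
    have heq := aux_scale_eq_shift hd hα hβ hf hT
    have hpay : avePayoff K g (scaleD μ (m T)) = avePayoff K g (shiftD μ T) := by
      funext z
      exact setIntegral_congr_fun measurableSet_Ioi fun t ht => by rw [heq ht]
    unfold gval
    rw [hpay]
  constructor
  · rw [← hmap, ← Filter.limsup_comp]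
    refine Filter.limsup_congr ?_
    filter_upwards [hev] with T hT
    simp only [Function.comp_apply]
    rw [hT]
  · constructor <;> intro h ε hε
    · have h1 := h ε hε
      rw [← hmap, eventually_map] at h1
      filter_upwards [h1, hev] with T h1 h2 ω
      rw [← h2]; exact h1 ω
    · rw [← hmap, eventually_map]
      filter_upwards [h ε hε, hev] with T h1 h2 ω
      rw [h2]; exact h1 ω
end
end

section
/- Suppose every process is step-constant on unit intervals: z(n+s) = z(n) for all z ∈ K, n ∈ ℕ∪{0}, s ∈ (0,1). Then for every density ϱ ∈ 𝔇 and every r ∈ (0,1) with ∫_r^∞ ϱ(t) dt > 0, and for every z ∈ K: |ĉ[ϱ](z) − (∫_r^∞ ϱ(t) dt)·ĉ[ϱ^r_shift](z)| ≤ V_0^∞[ϱ], where V_0^∞[ϱ] is the total variation of ϱ on [0,∞). -/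
open MeasureTheory Set Filter Topology
open scoped ENNReal

noncomputable section

variable {Ω : Type*}

/-- for step-constant processes, the averaged payoff and its shifted
version differ by at most the total variation of the density. -/
theorem payoff_shift_variation_bound {Ω : Type*} [Nonempty Ω] {K : Set (ℝ → Ω)}
    (hK : K.Nonempty) (g : Ω → ℝ) (hg : ∀ ω, g ω ∈ Icc (0 : ℝ) 1)
    (hgm : ∀ z ∈ K, Measurable fun t => g (z t))
    (hstep : StepConst K) :
    ∀ ρ : ℝ → ℝ, IsDensity ρ → ∀ r ∈ Ioo (0 : ℝ) 1, (0 < ∫ t in Ioi r, ρ t) →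
      ∀ z : K, ENNReal.ofReal
          |avePayoff K g ρ z - (∫ t in Ioi r, ρ t) * avePayoff K g (shiftD ρ r) z|
        ≤ eVariationOn ρ (Ici 0) := by
  intro ρ hρ r hr hIr z
  obtain ⟨hρm, hρ0, hρint, -⟩ := hρ
  obtain ⟨hr0, hr1⟩ := hr
  have hIne : (∫ t in Ioi r, ρ t) ≠ 0 := ne_of_gt hIr
  have hρIci : IntegrableOn ρ (Ici 0) := hρint.congr_set_ae Ioi_ae_eq_Ici.symm
  have hρIcir : IntegrableOn ρ (Ici r) :=
    (hρint.mono_set (Ioi_subset_Ioi hr0.le)).congr_set_ae Ioi_ae_eq_Ici.symm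
  have hpre : (fun x : ℝ => x + r) ⁻¹' (Ici r) = Ici 0 := by
    ext x; simp [le_add_iff_nonneg_left]
  have hρshift : IntegrableOn (fun t => ρ (t + r)) (Ici 0) := by
    have h2 := ((measurePreserving_add_right (volume : Measure ℝ) r).integrableOn_comp_preimage
      (MeasurableEquiv.addRight r).measurableEmbedding).mpr hρIcir
    rwa [hpre] at h2
  have hgz0 : ∀ t : ℝ, 0 ≤ g (z.1 t) := fun t => (hg _).1
  have hgz1 : ∀ t : ℝ, g (z.1 t) ≤ 1 := fun t => (hg _).2
  have hhm : Measurable fun t : ℝ => g (z.1 t) := hgm z.1 z.2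
  have hbound : ∀ (ψ : ℝ → ℝ), (∀ t, 0 ≤ ψ t) → ∀ t : ℝ, ‖ψ t * g (z.1 t)‖ ≤ ‖ψ t‖ := by
    intro ψ hψ t
    rw [Real.norm_eq_abs, Real.norm_eq_abs, abs_of_nonneg (mul_nonneg (hψ t) (hgz0 t)),
      abs_of_nonneg (hψ t)]
    exact mul_le_of_le_one_right (hψ t) (hgz1 t)
  have hf1 : IntegrableOn (fun t => ρ t * g (z.1 t)) (Ici 0) :=
    Integrable.mono hρIci ((hρm.mul hhm).aestronglyMeasurable) (ae_of_all _ (hbound ρ hρ0))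
  have hρsm : Measurable fun t : ℝ => ρ (t + r) := hρm.comp (measurable_add_const r)
  have hf2 : IntegrableOn (fun t => ρ (t + r) * g (z.1 t)) (Ici 0) :=
    Integrable.mono hρshift ((hρsm.mul hhm).aestronglyMeasurable)
      (ae_of_all _ (hbound (fun t => ρ (t + r)) (fun t => hρ0 _)))
  have hf : IntegrableOn (fun t => (ρ t - ρ (t + r)) * g (z.1 t)) (Ici 0) := by
    have := hf1.sub hf2
    simp only [sub_mul]; exact this
  have key : avePayoff K g ρ z - (∫ t in Ioi r, ρ t) * avePayoff K g (shiftD ρ r) z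
      = ∫ t in Ici (0:ℝ), (ρ t - ρ (t + r)) * g (z.1 t) := by
    have e1 : (∫ t in Ioi (0:ℝ), (ρ (t + r) / (∫ s in Ioi r, ρ s)) * g (z.1 t))
        = (∫ t in Ioi r, ρ t)⁻¹ * ∫ t in Ioi (0:ℝ), ρ (t + r) * g (z.1 t) := by
      rw [← integral_const_mul]
      congr 1; funext t; rw [div_eq_inv_mul, mul_assoc]
    show (∫ t in Ioi (0:ℝ), ρ t * g (z.1 t))
        - (∫ t in Ioi r, ρ t)
          * (∫ t in Ioi (0:ℝ), (ρ (t + r) / (∫ s in Ioi r, ρ s)) * g (z.1 t)) = _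
    rw [e1, mul_inv_cancel_left₀ hIne, ← integral_Ici_eq_integral_Ioi,
      ← integral_Ici_eq_integral_Ioi, ← integral_sub hf1 hf2]
    congr 1; funext t; ring
  rw [key]
  set V := eVariationOn ρ (Ici 0) with hVdef
  by_cases hVtop : V = ⊤
  · rw [hVtop]; exact le_top
  -- decomposition of [0,∞) into unit blocks
  have hunion : Ici (0:ℝ) = ⋃ n : ℕ, Ico (n:ℝ) ((n:ℝ)+1) := by
    ext x
    simp only [mem_Ici, mem_iUnion, mem_Ico]
    constructor
    · intro hx
      exact ⟨⌊x⌋₊, Nat.floor_le hx, Nat.lt_floor_add_one x⟩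
    · rintro ⟨n, h1, -⟩
      exact le_trans (Nat.cast_nonneg n) h1
  have hdisj : Pairwise (Function.onFun Disjoint fun n : ℕ => Ico (n:ℝ) ((n:ℝ)+1)) := by
    intro m n hmn
    simp only [Function.onFun]
    rw [Set.Ico_disjoint_Ico]
    rcases hmn.lt_or_gt with hl | hl
    · exact le_trans inf_le_left
        (le_trans (by exact_mod_cast Nat.succ_le_of_lt hl : (m:ℝ)+1 ≤ (n:ℝ)) le_sup_right)
    · exact le_trans inf_le_right
        (le_trans (by exact_mod_cast Nat.succ_le_of_lt hl : (n:ℝ)+1 ≤ (m:ℝ)) le_sup_left)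
  have hfU : IntegrableOn (fun t => (ρ t - ρ (t + r)) * g (z.1 t))
      (⋃ n : ℕ, Ico (n:ℝ) ((n:ℝ)+1)) := by rwa [hunion] at hf
  have hsum : HasSum (fun n : ℕ => ∫ t in Ico (n:ℝ) ((n:ℝ)+1), (ρ t - ρ (t + r)) * g (z.1 t))
      (∫ t in Ici (0:ℝ), (ρ t - ρ (t + r)) * g (z.1 t)) := by
    rw [hunion]
    exact hasSum_integral_iUnion (fun n => measurableSet_Ico) hdisj hfU
  -- interval integrability helpers
  have hIIρ : ∀ a b : ℝ, 0 ≤ a → 0 ≤ b → IntervalIntegrable ρ volume a b := by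
    intro a b ha hb
    refine (hρIci.mono_set ?_).intervalIntegrable
    intro x hx
    rw [Set.mem_uIcc] at hx
    rcases hx with ⟨h1, -⟩ | ⟨h1, -⟩ <;> [exact le_trans ha h1; exact le_trans hb h1]
  have hIIρr : ∀ a b : ℝ, 0 ≤ a → 0 ≤ b →
      IntervalIntegrable (fun t => ρ (t + r)) volume a b := by
    intro a b ha hb
    have h2 := (hIIρ (a + r) (b + r) (by linarith) (by linarith)).comp_add_right r
    simpa using h2
  have hIIρ1 : ∀ a b : ℝ, 0 ≤ a → 0 ≤ b →
      IntervalIntegrable (fun t => ρ (t + 1)) volume a b := by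
    intro a b ha hb
    have h2 := (hIIρ (a + 1) (b + 1) (by linarith) (by linarith)).comp_add_right 1
    simpa using h2
  -- the variation chain bound
  have chain : ∀ (N : ℕ) (s : ℝ), 0 ≤ s →
      (∑ n ∈ Finset.range N, |ρ (s + n) - ρ (s + n + 1)|) ≤ V.toReal := by
    intro N s hs
    have hu : Monotone fun i : ℕ => s + (i:ℝ) := by
      intro i j hij
      have : (i:ℝ) ≤ j := Nat.cast_le.mpr hij
      simp only
      linarith
    have hmem : ∀ i : ℕ, s + (i:ℝ) ∈ Ici (0:ℝ) := fun i => by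
      simp only [mem_Ici]; positivity
    have hle := eVariationOn.sum_le (f := ρ) (n := N) hu hmem
    have hconv : (∑ n ∈ Finset.range N, ENNReal.ofReal |ρ (s + n) - ρ (s + n + 1)|) ≤ V := by
      refine le_trans (le_of_eq (Finset.sum_congr rfl fun i _ => ?_)) hle
      have hcast : s + ((i + 1 : ℕ) : ℝ) = s + (i:ℝ) + 1 := by push_cast; ring
      rw [edist_dist, Real.dist_eq, hcast, abs_sub_comm (ρ (s + (i:ℝ)))]
    rw [← ENNReal.ofReal_sum_of_nonneg (fun i _ => abs_nonneg _)] at hconv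
    exact (ENNReal.ofReal_le_iff_le_toReal hVtop).mp hconv
  -- bounding each block integral
  have hII_abs : ∀ n : ℕ, IntervalIntegrable (fun s => |ρ (s + (n:ℝ)) - ρ (s + (n:ℝ) + 1)|)
      volume 0 r := by
    intro n
    refine IntervalIntegrable.abs (IntervalIntegrable.sub ?_ ?_)
    · have h2 := (hIIρ ((n:ℝ)) ((n:ℝ) + r) (by positivity) (by positivity)).comp_add_right (n:ℝ)
      simpa using h2
    · have h2 := (hIIρ ((n:ℝ) + 1) (((n:ℝ) + 1) + r) (by positivity)
        (by positivity)).comp_add_right ((n:ℝ) + 1)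
      have h3 : (fun x => ρ (x + ((n:ℝ) + 1))) = fun x => ρ (x + (n:ℝ) + 1) := by
        funext x; congr 1; ring
      rw [h3] at h2
      simpa using h2
  have hcn : ∀ n : ℕ, |∫ t in Ico (n:ℝ) ((n:ℝ)+1), (ρ t - ρ (t + r)) * g (z.1 t)|
      ≤ ∫ s in (0:ℝ)..r, |ρ (s + (n:ℝ)) - ρ (s + (n:ℝ) + 1)| := by
    intro n
    have hgconst : EqOn (fun t => (ρ t - ρ (t + r)) * g (z.1 t))
        (fun t => (ρ t - ρ (t + r)) * g (z.1 ((n:ℝ)))) (Ico (n:ℝ) ((n:ℝ)+1)) := by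
      intro t ht
      rcases eq_or_lt_of_le ht.1 with he | hlt
      · simp only [← he]
      · have hz : z.1 t = z.1 ((n:ℝ)) := by
          have hs := hstep z.1 z.2 n (t - (n:ℝ)) ⟨by linarith, by linarith [ht.2]⟩
          rw [add_sub_cancel] at hs
          exact hs
        simp only [hz]
    have e2 : (∫ t in Ico (n:ℝ) ((n:ℝ)+1), (ρ t - ρ (t + r)) * g (z.1 t))
        = (∫ t in (n:ℝ)..((n:ℝ)+1), (ρ t - ρ (t + r))) * g (z.1 ((n:ℝ))) := by
      rw [setIntegral_congr_fun measurableSet_Ico hgconst, integral_mul_const,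
        setIntegral_congr_set Ico_ae_eq_Ioc,
        ← intervalIntegral.integral_of_le (by linarith : (n:ℝ) ≤ (n:ℝ)+1)]
    have e3 : (∫ t in (n:ℝ)..((n:ℝ)+1), (ρ t - ρ (t + r)))
        = ∫ t in (n:ℝ)..((n:ℝ)+r), (ρ t - ρ (t + 1)) := by
      rw [intervalIntegral.integral_sub (hIIρ _ _ (by positivity) (by positivity))
          (hIIρr _ _ (by positivity) (by positivity)),
        intervalIntegral.integral_sub (hIIρ _ _ (by positivity) (by positivity))
          (hIIρ1 _ _ (by positivity) (by positivity)),
        intervalIntegral.integral_comp_add_right ρ r,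
        intervalIntegral.integral_comp_add_right ρ 1]
      have h1 : (∫ t in (n:ℝ)..((n:ℝ)+r), ρ t) + ∫ t in ((n:ℝ)+r)..((n:ℝ)+1), ρ t
          = ∫ t in (n:ℝ)..((n:ℝ)+1), ρ t :=
        intervalIntegral.integral_add_adjacent_intervals
          (hIIρ _ _ (by positivity) (by positivity)) (hIIρ _ _ (by positivity) (by positivity))
      have h2 : (∫ t in ((n:ℝ)+r)..((n:ℝ)+1), ρ t) + ∫ t in ((n:ℝ)+1)..((n:ℝ)+1+r), ρ t
          = ∫ t in ((n:ℝ)+r)..((n:ℝ)+1+r), ρ t :=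
        intervalIntegral.integral_add_adjacent_intervals
          (hIIρ _ _ (by positivity) (by positivity)) (hIIρ _ _ (by positivity) (by positivity))
      rw [show ((n:ℝ)+r+1) = ((n:ℝ)+1+r) by ring] at *
      linarith [h1, h2]
    have e4 : |∫ t in (n:ℝ)..((n:ℝ)+r), (ρ t - ρ (t + 1))|
        ≤ ∫ s in (0:ℝ)..r, |ρ (s + (n:ℝ)) - ρ (s + (n:ℝ) + 1)| := by
      have h5 := intervalIntegral.integral_comp_add_right (a := (0:ℝ)) (b := r)
        (fun t => |ρ t - ρ (t + 1)|) (n:ℝ)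
      refine le_trans (intervalIntegral.abs_integral_le_integral_abs (by linarith)) (le_of_eq ?_)
      rw [add_comm (n:ℝ) r]
      simpa using h5.symm
    rw [e2, e3]
    refine le_trans ?_ e4
    rw [abs_mul]
    exact mul_le_of_le_one_right (abs_nonneg _)
      (abs_le.mpr ⟨by linarith [hgz0 ((n:ℝ))], hgz1 _⟩)
  -- partial sums of the block bounds
  have hbleN : ∀ N : ℕ,
      (∑ n ∈ Finset.range N, ∫ s in (0:ℝ)..r, |ρ (s + (n:ℝ)) - ρ (s + (n:ℝ) + 1)|)
        ≤ r * V.toReal := by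
    intro N
    rw [← intervalIntegral.integral_finset_sum (fun i _ => hII_abs i)]
    have hint : IntervalIntegrable
        (fun x => ∑ n ∈ Finset.range N, |ρ (x + (n:ℝ)) - ρ (x + (n:ℝ) + 1)|) volume 0 r := by
      have h6 := IntervalIntegrable.sum (μ := volume) (a := (0:ℝ)) (b := r)
        (Finset.range N) (fun i _ => hII_abs i)
      have h7 : (∑ i ∈ Finset.range N, fun s => |ρ (s + (i:ℝ)) - ρ (s + (i:ℝ) + 1)|)
          = fun x => ∑ n ∈ Finset.range N, |ρ (x + (n:ℝ)) - ρ (x + (n:ℝ) + 1)| := by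
        funext x
        simp [Finset.sum_apply]
      rwa [h7] at h6
    have hmono := intervalIntegral.integral_mono_on hr0.le hint
      (intervalIntegrable_const (c := V.toReal))
      (fun s hs => chain N s hs.1)
    refine le_trans hmono (le_of_eq ?_)
    rw [intervalIntegral.integral_const]
    simp [smul_eq_mul]
  have hb0 : ∀ n : ℕ, 0 ≤ ∫ s in (0:ℝ)..r, |ρ (s + (n:ℝ)) - ρ (s + (n:ℝ) + 1)| := fun n =>
    intervalIntegral.integral_nonneg hr0.le (fun s _ => abs_nonneg _)
  have hbsummable : Summable fun n : ℕ =>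
      ∫ s in (0:ℝ)..r, |ρ (s + (n:ℝ)) - ρ (s + (n:ℝ) + 1)| :=
    summable_of_sum_range_le hb0 hbleN
  have hc'summ : Summable fun n : ℕ =>
      |∫ t in Ico (n:ℝ) ((n:ℝ)+1), (ρ t - ρ (t + r)) * g (z.1 t)| :=
    Summable.of_nonneg_of_le (fun n => abs_nonneg _) hcn hbsummable
  have hD : |∫ t in Ici (0:ℝ), (ρ t - ρ (t + r)) * g (z.1 t)| ≤ r * V.toReal := by
    rw [← hsum.tsum_eq]
    calc |∑' n : ℕ, ∫ t in Ico (n:ℝ) ((n:ℝ)+1), (ρ t - ρ (t + r)) * g (z.1 t)|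
        ≤ ∑' n : ℕ, |∫ t in Ico (n:ℝ) ((n:ℝ)+1), (ρ t - ρ (t + r)) * g (z.1 t)| := by
          have hsn : Summable fun n : ℕ =>
              ‖∫ t in Ico (n:ℝ) ((n:ℝ)+1), (ρ t - ρ (t + r)) * g (z.1 t)‖ := by
            simpa [Real.norm_eq_abs] using hc'summ
          simpa [Real.norm_eq_abs] using norm_tsum_le_tsum_norm hsn
      _ ≤ ∑' n : ℕ, ∫ s in (0:ℝ)..r, |ρ (s + (n:ℝ)) - ρ (s + (n:ℝ) + 1)| :=
          Summable.tsum_le_tsum hcn hc'summ hbsummable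
      _ ≤ r * V.toReal := Summable.tsum_le_of_sum_range_le hbsummable hbleN
  have hfinal : |∫ t in Ici (0:ℝ), (ρ t - ρ (t + r)) * g (z.1 t)| ≤ V.toReal := by
    refine le_trans hD ?_
    nlinarith [ENNReal.toReal_nonneg (a := V)]
  calc ENNReal.ofReal |∫ t in Ici (0:ℝ), (ρ t - ρ (t + r)) * g (z.1 t)|
      ≤ ENNReal.ofReal V.toReal := ENNReal.ofReal_le_ofReal hfinal
    _ = V := ENNReal.ofReal_toReal hVtop
end
end

section
/- Suppose the game mapping V satisfies the discrete dynamic programming principle on 𝔇 (V[c^n_ϱ] = V[ĉ[ϱ]] for all ϱ ∈ 𝔇 and all n ∈ ℕ with ∫_n^∞ ϱ(t) dt > 0), and every process is step-constant on unit intervals (z(n+s) = z(n) for all z ∈ K, n ∈ ℕ∪{0}, s ∈ (0,1)). Then for every ϱ ∈ 𝔇 and every real T > 1 with ∫₀^T ϱ(t) dt < 1: |V[c^T_ϱ](ω) − 𝒱[ϱ](ω)| ≤ 2·V_0^∞[ϱ] for all ω ∈ Ω. In particular V then satisfies the asymptotic dynamic programming hypothesis: for every κ > 0 there exists γ > 0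 (e.g., γ = κ/2) such that |V[c^T_ν](ω) − V[ĉ[ν]](ω)| < κ for all ν ∈ 𝔇, T > 1 with V_0^∞[ν] < γ and ∫₀^T ν(t) dt < 1, and all ω ∈ Ω. -/
open MeasureTheory Set Filter Topology
open scoped ENNReal

noncomputable section

variable {Ω : Type*}

/-! ### Auxiliary lemmas for the proof -/

section Aux

lemma integrableOn_shiftAux {f : ℝ → ℝ} {c : ℝ} (h : IntegrableOn f (Ioi c)) :
    IntegrableOn (fun t => f (t + c)) (Ioi (0:ℝ)) := by
  have hpre : (fun x : ℝ => x + c) ⁻¹' (Ioi c) = Ioi 0 := by ext x; simp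
  have := (MeasurePreserving.integrableOn_comp_preimage
    (measurePreserving_add_right volume c)
    (MeasurableEquiv.addRight c).measurableEmbedding (f := f) (s := Ioi c)).2 h
  rwa [hpre] at this

lemma integral_shiftAux (f : ℝ → ℝ) (c : ℝ) :
    ∫ t in Ioi (0:ℝ), f (t + c) = ∫ t in Ioi c, f t := by
  have hpre : (fun x : ℝ => x + c) ⁻¹' (Ioi c) = Ioi 0 := by ext x; simp
  have := (measurePreserving_add_right volume c).setIntegral_preimage_emb
    (MeasurableEquiv.addRight c).measurableEmbedding f (Ioi c)
  rwa [hpre] at this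

lemma split_IoiAux {f : ℝ → ℝ} {a b : ℝ} (hab : a ≤ b) (hi : IntegrableOn f (Ioi a)) :
    ∫ t in Ioi a, f t = (∫ t in Ioc a b, f t) + ∫ t in Ioi b, f t := by
  rw [← Ioc_union_Ioi_eq_Ioi hab,
    setIntegral_union (Ioc_disjoint_Ioi le_rfl) measurableSet_Ioi
      (hi.mono_set Ioc_subset_Ioi_self) (hi.mono_set (Ioi_subset_Ioi hab))]

variable {Ω : Type*} {K : Set (ℝ → Ω)}

lemma GameMap.const_eq (Vmap : GameMap Ω K) (B : ℝ) : Vmap.V (fun _ => B) = fun _ => B := by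
  have h := Vmap.affine (fun _ => 0) ⟨0, by simp⟩ 0 B le_rfl
  simpa using h

lemma GameMap.smul_eq (Vmap : GameMap Ω K) (c : K → ℝ) (hc : ∃ M, ∀ z, |c z| ≤ M)
    (A : ℝ) (hA : 0 ≤ A) : Vmap.V (fun z => A * c z) = fun ω => A * Vmap.V c ω := by
  have h := Vmap.affine c hc A 0 hA
  simpa using h

lemma GameMap.dist_le (Vmap : GameMap Ω K) {c₁ c₂ : K → ℝ}
    (h₁ : ∃ M, ∀ z, |c₁ z| ≤ M) (h₂ : ∃ M, ∀ z, |c₂ z| ≤ M) {δ : ℝ}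
    (h : ∀ z, |c₁ z - c₂ z| ≤ δ) (ω : Ω) : |Vmap.V c₁ ω - Vmap.V c₂ ω| ≤ δ := by
  obtain ⟨M₁, hM₁⟩ := h₁
  obtain ⟨M₂, hM₂⟩ := h₂
  have e₂ := Vmap.affine c₂ ⟨M₂, hM₂⟩ 1 δ zero_le_one
  have e₁ := Vmap.affine c₁ ⟨M₁, hM₁⟩ 1 δ zero_le_one
  have b₂ : ∃ M, ∀ z, |1 * c₂ z + δ| ≤ M :=
    ⟨M₂ + |δ|, fun z => by
      calc |1 * c₂ z + δ| ≤ |1 * c₂ z| + |δ| := abs_add_le _ _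
      _ ≤ M₂ + |δ| := by rw [one_mul]; exact add_le_add (hM₂ z) le_rfl⟩
  have b₁ : ∃ M, ∀ z, |1 * c₁ z + δ| ≤ M :=
    ⟨M₁ + |δ|, fun z => by
      calc |1 * c₁ z + δ| ≤ |1 * c₁ z| + |δ| := abs_add_le _ _
      _ ≤ M₁ + |δ| := by rw [one_mul]; exact add_le_add (hM₁ z) le_rfl⟩
  have m₁ : Vmap.V c₁ ω ≤ 1 * Vmap.V c₂ ω + δ := by
    rw [← congrFun e₂ ω]
    exact Vmap.mono _ _ ⟨M₁, hM₁⟩ b₂ (fun z => by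
      have := abs_le.1 (h z); rw [one_mul]; linarith [this.2]) ω
  have m₂ : Vmap.V c₂ ω ≤ 1 * Vmap.V c₁ ω + δ := by
    rw [← congrFun e₁ ω]
    exact Vmap.mono _ _ ⟨M₂, hM₂⟩ b₁ (fun z => by
      have := abs_le.1 (h z); rw [one_mul]; linarith [this.1]) ω
  rw [abs_le]; constructor <;> linarith

lemma payoff_intAux {g : Ω → ℝ} (hg : ∀ ω, g ω ∈ Icc (0:ℝ) 1)
    (hgm : ∀ z ∈ K, Measurable fun t => g (z t)) {f : ℝ → ℝ} (hfm : Measurable f)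
    (hf0 : ∀ t, 0 ≤ f t) (hfi : IntegrableOn f (Ioi 0)) (z : K) :
    IntegrableOn (fun t => f t * g (z.1 t)) (Ioi 0) := by
  refine Integrable.mono' hfi ((hfm.mul (hgm z.1 z.2)).aestronglyMeasurable) ?_
  filter_upwards with t
  rw [Real.norm_eq_abs, abs_mul, abs_of_nonneg (hf0 t), abs_of_nonneg (hg (z.1 t)).1]
  calc f t * g (z.1 t) ≤ f t * 1 := mul_le_mul_of_nonneg_left (hg (z.1 t)).2 (hf0 t)
  _ = f t := mul_one _

lemma payoff_boundsAux {g : Ω → ℝ} (hg : ∀ ω, g ω ∈ Icc (0:ℝ) 1)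
    (hgm : ∀ z ∈ K, Measurable fun t => g (z t)) {f : ℝ → ℝ} (hfm : Measurable f)
    (hf0 : ∀ t, 0 ≤ f t) (hfi : IntegrableOn f (Ioi 0)) (z : K) :
    (∫ t in Ioi (0:ℝ), f t * g (z.1 t)) ∈ Icc 0 (∫ t in Ioi (0:ℝ), f t) := by
  constructor
  · exact setIntegral_nonneg measurableSet_Ioi fun t _ => mul_nonneg (hf0 t) (hg (z.1 t)).1
  · refine setIntegral_mono_on (payoff_intAux hg hgm hfm hf0 hfi z) hfi measurableSet_Ioi ?_
    intro t _
    calc f t * g (z.1 t) ≤ f t * 1 := mul_le_mul_of_nonneg_left (hg (z.1 t)).2 (hf0 t)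
    _ = f t := mul_one _

lemma density_le_varAux {ρ : ℝ → ℝ} (hi : IntegrableOn ρ (Ioi 0))
    (hE : eVariationOn ρ (Ici 0) ≠ ⊤) {t : ℝ} (ht : 0 ≤ t) :
    ρ t ≤ (eVariationOn ρ (Ici 0)).toReal := by
  by_contra hc
  push_neg at hc
  set VR := (eVariationOn ρ (Ici 0)).toReal with hVR
  have key : ∀ u, 0 ≤ u → ρ t - VR ≤ ρ u := by
    intro u hu
    have h1 : edist (ρ t) (ρ u) ≤ eVariationOn ρ (Ici 0) := eVariationOn.edist_le ρ ht hu
    have h2 : dist (ρ t) (ρ u) ≤ VR := by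
      rw [edist_dist] at h1
      have := ENNReal.toReal_mono hE h1
      rwa [ENNReal.toReal_ofReal dist_nonneg] at this
    have := abs_le.1 (by rwa [Real.dist_eq] at h2)
    linarith [this.2]
  have hδ : 0 < ρ t - VR := by linarith
  have hint : Integrable (fun _ : ℝ => ρ t - VR) (volume.restrict (Ioi 0)) := by
    refine Integrable.mono' hi aestronglyMeasurable_const ?_
    rw [ae_restrict_iff' measurableSet_Ioi]
    filter_upwards with u hu
    rw [Real.norm_eq_abs, abs_of_pos hδ]
    exact key u (le_of_lt hu)
  rw [integrable_const_iff] at hint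
  rcases hint with h | h
  · linarith
  · have h := h.measure_univ_lt_top
    rw [Measure.restrict_apply_univ, Real.volume_Ioi] at h
    exact (lt_irrefl _ h).elim

lemma shift_diff_integral_leAux {ρ : ℝ → ℝ}
    (hi : IntegrableOn ρ (Ioi 0)) (hE : eVariationOn ρ (Ici 0) ≠ ⊤)
    {a b : ℝ} (ha : 0 ≤ a) (hab : a ≤ b) :
    (∫ t in Ioi (0:ℝ), |ρ (t + b) - ρ (t + a)|)
      ≤ (b - a) * (eVariationOn ρ (Ici 0)).toReal := by
  have hb : (0:ℝ) ≤ b := le_trans ha hab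
  set VR := (eVariationOn ρ (Ici 0)).toReal with hVRdef
  set v : ℝ → ℝ := fun u => (eVariationOn ρ (Ici 0 ∩ Icc 0 u)).toReal with hvdef
  have hsubE : ∀ s : Set ℝ, s ⊆ Ici 0 → eVariationOn ρ s ≠ ⊤ :=
    fun s hs => ne_top_of_le_ne_top hE (eVariationOn.mono ρ hs)
  have hvmono : Monotone v := by
    intro u₁ u₂ h
    exact ENNReal.toReal_mono (hsubE _ inter_subset_left)
      (eVariationOn.mono ρ (inter_subset_inter_right _ (Icc_subset_Icc_right h)))
  have hvle : ∀ u, v u ≤ VR :=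
    fun u => ENNReal.toReal_mono hE (eVariationOn.mono ρ inter_subset_left)
  have hv0 : ∀ u, 0 ≤ v u := fun u => ENNReal.toReal_nonneg
  have hpt : ∀ t, 0 ≤ t → |ρ (t + b) - ρ (t + a)| ≤ v (t + b) - v (t + a) := by
    intro t ht
    have hx : (0:ℝ) ≤ t + a := by linarith
    have hy : t + a ≤ t + b := by linarith
    have hsum := eVariationOn.Icc_add_Icc ρ (s := Ici 0) hx hy hx
    have hfin1 : eVariationOn ρ (Ici 0 ∩ Icc 0 (t + a)) ≠ ⊤ := hsubE _ inter_subset_left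
    have hfin2 : eVariationOn ρ (Ici 0 ∩ Icc (t + a) (t + b)) ≠ ⊤ := hsubE _ inter_subset_left
    have hed : edist (ρ (t + a)) (ρ (t + b)) ≤ eVariationOn ρ (Ici 0 ∩ Icc (t + a) (t + b)) :=
      eVariationOn.edist_le ρ (mem_inter (mem_Ici.2 hx) (mem_Icc.2 ⟨le_refl _, hy⟩))
        (mem_inter (mem_Ici.2 (by linarith : (0:ℝ) ≤ t + b)) (mem_Icc.2 ⟨hy, le_refl _⟩))
    have hd : |ρ (t + b) - ρ (t + a)|
        ≤ (eVariationOn ρ (Ici 0 ∩ Icc (t + a) (t + b))).toReal := by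
      rw [edist_dist] at hed
      have := ENNReal.toReal_mono hfin2 hed
      rw [ENNReal.toReal_ofReal dist_nonneg, Real.dist_eq] at this
      rwa [abs_sub_comm]
    have hvadd : v (t + b)
        = v (t + a) + (eVariationOn ρ (Ici 0 ∩ Icc (t + a) (t + b))).toReal := by
      rw [hvdef]
      simp only
      rw [← hsum, ENNReal.toReal_add hfin1 hfin2]
    linarith
  have hia : IntegrableOn (fun t => ρ (t + a)) (Ioi 0) :=
    integrableOn_shiftAux (hi.mono_set (Ioi_subset_Ioi ha))
  have hib : IntegrableOn (fun t => ρ (t + b)) (Ioi 0) :=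
    integrableOn_shiftAux (hi.mono_set (Ioi_subset_Ioi hb))
  have hFi : IntegrableOn (fun t => |ρ (t + b) - ρ (t + a)|) (Ioi 0) := (hib.sub hia).abs
  have hlim := intervalIntegral_tendsto_integral_Ioi 0 hFi tendsto_id
  refine le_of_tendsto hlim ?_
  filter_upwards [eventually_ge_atTop (0:ℝ)] with R hR
  have hvI : ∀ (c d e : ℝ), IntervalIntegrable (fun t => v (t + e)) volume c d :=
    fun c d e => (hvmono.comp
      (fun x y hxy => by simpa using add_le_add_right hxy e : Monotone (fun t : ℝ => t + e))).intervalIntegrable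
  have hvI0 : ∀ (c d : ℝ), IntervalIntegrable v volume c d := fun c d => hvmono.intervalIntegrable
  have hFI : IntervalIntegrable (fun t => |ρ (t + b) - ρ (t + a)|) volume 0 R := by
    rw [intervalIntegrable_iff_integrableOn_Ioc_of_le hR]
    exact hFi.mono_set Ioc_subset_Ioi_self
  show (∫ t in (0:ℝ)..(id R), |ρ (t + b) - ρ (t + a)|) ≤ (b - a) * VR
  simp only [id]
  calc (∫ t in (0:ℝ)..R, |ρ (t + b) - ρ (t + a)|)
      ≤ ∫ t in (0:ℝ)..R, (v (t + b) - v (t + a)) :=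
        intervalIntegral.integral_mono_on hR hFI ((hvI 0 R b).sub (hvI 0 R a))
          (fun t htm => hpt t htm.1)
    _ = (∫ t in (0:ℝ)..R, v (t + b)) - ∫ t in (0:ℝ)..R, v (t + a) :=
        intervalIntegral.integral_sub (hvI 0 R b) (hvI 0 R a)
    _ = (∫ t in b..(R + b), v t) - ∫ t in a..(R + a), v t := by
        rw [intervalIntegral.integral_comp_add_right v b,
          intervalIntegral.integral_comp_add_right v a, zero_add, zero_add]
    _ = ((∫ t in b..(R + a), v t) + ∫ t in (R + a)..(R + b), v t)
        - ((∫ t in a..b, v t) + ∫ t in b..(R + a), v t) := by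
        rw [intervalIntegral.integral_add_adjacent_intervals (hvI0 b (R + a)) (hvI0 (R + a) (R + b)),
          intervalIntegral.integral_add_adjacent_intervals (hvI0 a b) (hvI0 b (R + a))]
    _ = (∫ t in (R + a)..(R + b), v t) - ∫ t in a..b, v t := by ring
    _ ≤ ∫ t in (R + a)..(R + b), v t := by
        have h0 : 0 ≤ ∫ t in a..b, v t := intervalIntegral.integral_nonneg hab (fun u _ => hv0 u)
        linarith
    _ ≤ ∫ _t in (R + a)..(R + b), VR := by
        refine intervalIntegral.integral_mono_on (by linarith) (hvI0 _ _)
          intervalIntegrable_const ?_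
        intro t _; exact hvle t
    _ = (b - a) * VR := by
        rw [intervalIntegral.integral_const, smul_eq_mul]; ring

lemma key_shiftAux {g : Ω → ℝ} (hg : ∀ ω, g ω ∈ Icc (0:ℝ) 1)
    (hgm : ∀ z ∈ K, Measurable fun t => g (z t)) (Vmap : GameMap Ω K)
    {ρ : ℝ → ℝ} (hρm : Measurable ρ) (hρ0 : ∀ t, 0 ≤ ρ t) (hρi : IntegrableOn ρ (Ioi 0))
    {T' : ℝ} (hT' : 0 ≤ T') :
    Vmap.V (fun z : K => ∫ t in Ioi (0:ℝ), ρ (t + T') * g (z.1 t))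
      = fun ω => (∫ t in Ioi T', ρ t) * gval Vmap g (shiftD ρ T') ω := by
  set I := ∫ t in Ioi T', ρ t with hIdef
  have hρiT : IntegrableOn ρ (Ioi T') := hρi.mono_set (Ioi_subset_Ioi hT')
  have hsm : Measurable fun t => ρ (t + T') := hρm.comp (measurable_id.add_const T')
  have hsi : IntegrableOn (fun t => ρ (t + T')) (Ioi 0) := integrableOn_shiftAux hρiT
  have hs0 : ∀ t, 0 ≤ ρ (t + T') := fun t => hρ0 _
  have hIeq : (∫ t in Ioi (0:ℝ), ρ (t + T')) = I := integral_shiftAux ρ T'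
  have hI0 : 0 ≤ I := setIntegral_nonneg measurableSet_Ioi fun t _ => hρ0 t
  rcases eq_or_lt_of_le hI0 with hI | hI
  · have heq0 : (fun z : K => ∫ t in Ioi (0:ℝ), ρ (t + T') * g (z.1 t)) = fun _ => (0:ℝ) := by
      funext z
      have hb := payoff_boundsAux hg hgm hsm hs0 hsi z
      rw [hIeq, ← hI] at hb
      exact le_antisymm hb.2 hb.1
    rw [heq0, Vmap.const_eq]
    funext ω
    rw [← hI, zero_mul]
  · have hINe : I ≠ 0 := ne_of_gt hI
    have have_eq : avePayoff K g (shiftD ρ T')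
        = fun z => (∫ t in Ioi (0:ℝ), ρ (t + T') * g (z.1 t)) / I := by
      funext z
      unfold avePayoff shiftD
      rw [← hIdef, ← integral_div]
      congr 1
      funext t
      rw [div_mul_eq_mul_div]
    have hmsh : Measurable (shiftD ρ T') := hsm.div_const _
    have h0sh : ∀ t, 0 ≤ shiftD ρ T' t := fun t => div_nonneg (hρ0 _)
      (by rw [← hIdef]; exact hI0)
    have hish : IntegrableOn (shiftD ρ T') (Ioi 0) := by
      unfold shiftD
      rw [← hIdef]
      exact hsi.div_const I
    have hbdd : ∃ M, ∀ z : K, |avePayoff K g (shiftD ρ T') z| ≤ M := by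
      refine ⟨∫ t in Ioi (0:ℝ), shiftD ρ T' t, fun z => ?_⟩
      have := payoff_boundsAux hg hgm hmsh h0sh hish z
      show |∫ t in Ioi (0:ℝ), shiftD ρ T' t * g (z.1 t)| ≤ ∫ t in Ioi (0:ℝ), shiftD ρ T' t
      exact abs_le.2 ⟨by linarith [this.1, this.2], this.2⟩
    have hfun : (fun z : K => ∫ t in Ioi (0:ℝ), ρ (t + T') * g (z.1 t))
        = fun z => I * avePayoff K g (shiftD ρ T') z := by
      rw [have_eq]
      funext z
      rw [mul_comm, div_mul_cancel₀ _ hINe]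
    rw [hfun, Vmap.smul_eq _ hbdd I hI0]
    rfl

lemma dppPayoff_bddAux [Nonempty Ω] {g : Ω → ℝ} (hg : ∀ ω, g ω ∈ Icc (0:ℝ) 1)
    (hgm : ∀ z ∈ K, Measurable fun t => g (z t)) (Vmap : GameMap Ω K)
    {ρ : ℝ → ℝ} (hρm : Measurable ρ) (hρ0 : ∀ t, 0 ≤ ρ t) (hρi : IntegrableOn ρ (Ioi 0))
    {T' : ℝ} (hT' : 0 ≤ T') :
    ∃ M, ∀ z : K, |dppPayoff Vmap g ρ T' z| ≤ M := by
  have hmsh : Measurable (shiftD ρ T') := (hρm.comp (measurable_id.add_const T')).div_const _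
  have h0sh : ∀ t, 0 ≤ shiftD ρ T' t := fun t => div_nonneg (hρ0 _)
    (setIntegral_nonneg measurableSet_Ioi fun s _ => hρ0 s)
  have hish : IntegrableOn (shiftD ρ T') (Ioi 0) :=
    (integrableOn_shiftAux (hρi.mono_set (Ioi_subset_Ioi hT'))).div_const _
  obtain ⟨M, hM⟩ := Vmap.bdd (avePayoff K g (shiftD ρ T'))
    ⟨∫ t in Ioi (0:ℝ), shiftD ρ T' t, fun z => by
      have := payoff_boundsAux hg hgm hmsh h0sh hish z
      show |∫ t in Ioi (0:ℝ), shiftD ρ T' t * g (z.1 t)| ≤ ∫ t in Ioi (0:ℝ), shiftD ρ T' t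
      exact abs_le.2 ⟨by linarith [this.1, this.2], this.2⟩⟩
  refine ⟨(∫ t in Ioi (0:ℝ), ρ t) + |∫ t in Ioi T', ρ t| * M, fun z => ?_⟩
  have hprod : IntegrableOn (fun t => ρ t * g (z.1 t)) (Ioi 0) :=
    payoff_intAux hg hgm hρm hρ0 hρi z
  have h1 : |∫ t in Ioc (0:ℝ) T', ρ t * g (z.1 t)| ≤ ∫ t in Ioi (0:ℝ), ρ t := by
    have hnn : 0 ≤ ∫ t in Ioc (0:ℝ) T', ρ t * g (z.1 t) :=
      setIntegral_nonneg measurableSet_Ioc fun t _ => mul_nonneg (hρ0 t) (hg _).1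
    rw [abs_of_nonneg hnn]
    calc (∫ t in Ioc (0:ℝ) T', ρ t * g (z.1 t))
        ≤ ∫ t in Ioi (0:ℝ), ρ t * g (z.1 t) := by
          refine setIntegral_mono_set hprod ?_ (HasSubset.Subset.eventuallyLE Ioc_subset_Ioi_self)
          filter_upwards with t using mul_nonneg (hρ0 t) (hg _).1
      _ ≤ ∫ t in Ioi (0:ℝ), ρ t := (payoff_boundsAux hg hgm hρm hρ0 hρi z).2
  calc |dppPayoff Vmap g ρ T' z|
      ≤ |∫ t in Ioc (0:ℝ) T', ρ t * g (z.1 t)|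
        + |(∫ t in Ioi T', ρ t) * gval Vmap g (shiftD ρ T') (z.1 T')| := abs_add_le _ _
    _ ≤ (∫ t in Ioi (0:ℝ), ρ t) + |∫ t in Ioi T', ρ t| * M := by
        refine add_le_add h1 ?_
        rw [abs_mul]
        exact mul_le_mul_of_nonneg_left (hM _) (abs_nonneg _)

end Aux


/-- under the discrete dynamic programming principle and step-constancy,
`|V[c^T_ϱ](ω) − 𝒱[ϱ](ω)| ≤ 2·V₀^∞[ϱ]` for `T > 1` with `∫₀^T ϱ < 1`; in particular the
asymptotic dynamic programming hypothesis holds. -/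
theorem discrete_dpp_implies_adpp {Ω : Type*} [Nonempty Ω] {K : Set (ℝ → Ω)}
    (hK : K.Nonempty) (g : Ω → ℝ) (hg : ∀ ω, g ω ∈ Icc (0 : ℝ) 1)
    (hgm : ∀ z ∈ K, Measurable fun t => g (z t))
    (Vmap : GameMap Ω K) (hdpp : DiscreteDPP Vmap g) (hstep : StepConst K) :
    (∀ ρ : ℝ → ℝ, IsDensity ρ → ∀ T : ℝ, 1 < T → (∫ t in Ioc (0 : ℝ) T, ρ t) < 1 →
      ∀ ω, ENNReal.ofReal |Vmap.V (dppPayoff Vmap g ρ T) ω - gval Vmap g ρ ω|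
        ≤ 2 * eVariationOn ρ (Ici 0)) ∧
    ADPP Vmap g := by
  have main : ∀ ρ : ℝ → ℝ, IsDensity ρ → ∀ T : ℝ, 1 < T → (∫ t in Ioc (0 : ℝ) T, ρ t) < 1 →
      ∀ ω, ENNReal.ofReal |Vmap.V (dppPayoff Vmap g ρ T) ω - gval Vmap g ρ ω|
        ≤ 2 * eVariationOn ρ (Ici 0) := by
    intro ρ hρ T hT hlt ω
    obtain ⟨hρm, hρ0, hρi, hρ1⟩ := hρ
    by_cases hE : eVariationOn ρ (Ici 0) = ⊤
    · rw [hE, ENNReal.mul_top (by norm_num)]; exact le_top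
    set n : ℕ := ⌊T⌋₊ with hndef
    have hT0 : (0:ℝ) < T := by linarith
    have hn1 : 1 ≤ n := Nat.le_floor (by exact_mod_cast hT.le)
    have hnr : (1:ℝ) ≤ (n:ℝ) := by exact_mod_cast hn1
    have hnT : ((n:ℕ):ℝ) ≤ T := Nat.floor_le hT0.le
    have hTn1 : T < ((n:ℕ):ℝ) + 1 := Nat.lt_floor_add_one T
    have hn0 : (0:ℝ) ≤ ((n:ℕ):ℝ) := by linarith
    have hsplitT := split_IoiAux hT0.le hρi
    rw [hρ1] at hsplitT
    have hIT0 : 0 < ∫ t in Ioi T, ρ t := by linarith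
    have hD0 : 0 ≤ ∫ t in Ioc ((n:ℕ):ℝ) T, ρ t :=
      setIntegral_nonneg measurableSet_Ioc fun t _ => hρ0 t
    have hIN : (∫ t in Ioi ((n:ℕ):ℝ), ρ t)
        = (∫ t in Ioc ((n:ℕ):ℝ) T, ρ t) + ∫ t in Ioi T, ρ t :=
      split_IoiAux hnT (hρi.mono_set (Ioi_subset_Ioi hn0))
    have hIN0 : 0 < ∫ t in Ioi ((n:ℕ):ℝ), ρ t := by rw [hIN]; linarith
    have hdppn := hdpp ρ ⟨hρm, hρ0, hρi, hρ1⟩ n hn1 hIN0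
    have hgvn : gval Vmap g ρ ω = Vmap.V (dppPayoff Vmap g ρ ((n:ℕ):ℝ)) ω := by
      unfold gval; rw [hdppn]
    rcases eq_or_lt_of_le hnT with heq | hlt'
    · rw [hgvn, ← heq, sub_self, abs_zero, ENNReal.ofReal_zero]; exact zero_le
    · set VR := (eVariationOn ρ (Ici 0)).toReal with hVRdef
      have hVR0 : (0:ℝ) ≤ VR := ENNReal.toReal_nonneg
      have hkeyT := key_shiftAux hg hgm Vmap hρm hρ0 hρi hT0.le
      have hkeyN := key_shiftAux hg hgm Vmap hρm hρ0 hρi hn0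
      have hsmT : Measurable fun t => ρ (t + T) := hρm.comp (measurable_id.add_const T)
      have hsmN : Measurable fun t => ρ (t + ((n:ℕ):ℝ)) := hρm.comp (measurable_id.add_const _)
      have hsiT : IntegrableOn (fun t => ρ (t + T)) (Ioi 0) :=
        integrableOn_shiftAux (hρi.mono_set (Ioi_subset_Ioi hT0.le))
      have hsiN : IntegrableOn (fun t => ρ (t + ((n:ℕ):ℝ))) (Ioi 0) :=
        integrableOn_shiftAux (hρi.mono_set (Ioi_subset_Ioi hn0))
      have hs0T : ∀ t, 0 ≤ ρ (t + T) := fun t => hρ0 _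
      have hs0N : ∀ t, 0 ≤ ρ (t + ((n:ℕ):ℝ)) := fun t => hρ0 _
      have heTbdd : ∃ M, ∀ z : K, |∫ t in Ioi (0:ℝ), ρ (t + T) * g (z.1 t)| ≤ M :=
        ⟨∫ t in Ioi (0:ℝ), ρ (t + T), fun z => by
          have := payoff_boundsAux hg hgm hsmT hs0T hsiT z
          exact abs_le.2 ⟨by linarith [this.1, this.2], this.2⟩⟩
      have heNbdd : ∃ M, ∀ z : K, |∫ t in Ioi (0:ℝ), ρ (t + ((n:ℕ):ℝ)) * g (z.1 t)| ≤ M :=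
        ⟨∫ t in Ioi (0:ℝ), ρ (t + ((n:ℕ):ℝ)), fun z => by
          have := payoff_boundsAux hg hgm hsmN hs0N hsiN z
          exact abs_le.2 ⟨by linarith [this.1, this.2], this.2⟩⟩
      have hJint := shift_diff_integral_leAux hρi hE hn0 hnT
      have hJ : ∀ w : K, |(∫ t in Ioi (0:ℝ), ρ (t + T) * g (w.1 t))
          - ∫ t in Ioi (0:ℝ), ρ (t + ((n:ℕ):ℝ)) * g (w.1 t)| ≤ VR := by
        intro w
        have hipT := payoff_intAux hg hgm hsmT hs0T hsiT w
        have hipN := payoff_intAux hg hgm hsmN hs0N hsiN w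
        rw [← integral_sub hipT hipN]
        calc |∫ t in Ioi (0:ℝ), (ρ (t + T) * g (w.1 t) - ρ (t + ((n:ℕ):ℝ)) * g (w.1 t))|
            ≤ ∫ t in Ioi (0:ℝ), |ρ (t + T) * g (w.1 t) - ρ (t + ((n:ℕ):ℝ)) * g (w.1 t)| := by
              have := norm_integral_le_integral_norm (μ := volume.restrict (Ioi 0))
                (fun t => ρ (t + T) * g (w.1 t) - ρ (t + ((n:ℕ):ℝ)) * g (w.1 t))
              simpa [Real.norm_eq_abs] using this
          _ ≤ ∫ t in Ioi (0:ℝ), |ρ (t + T) - ρ (t + ((n:ℕ):ℝ))| := by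
              refine setIntegral_mono_on (hipT.sub hipN).abs (hsiT.sub hsiN).abs
                measurableSet_Ioi ?_
              intro t _
              rw [← sub_mul, abs_mul]
              exact mul_le_of_le_one_right (abs_nonneg _)
                (abs_le.2 ⟨by linarith [(hg (w.1 t)).1], (hg (w.1 t)).2⟩)
          _ ≤ (T - ((n:ℕ):ℝ)) * VR := hJint
          _ ≤ 1 * VR := mul_le_mul_of_nonneg_right (by linarith) hVR0
          _ = VR := one_mul _
      have hDle : (∫ t in Ioc ((n:ℕ):ℝ) T, ρ t) ≤ VR := by
        have hsub1 : Ioc ((n:ℕ):ℝ) T ⊆ Ioi 0 :=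
          Ioc_subset_Ioi_self.trans (Ioi_subset_Ioi hn0)
        calc (∫ t in Ioc ((n:ℕ):ℝ) T, ρ t) ≤ ∫ _t in Ioc ((n:ℕ):ℝ) T, VR := by
              refine setIntegral_mono_on (hρi.mono_set hsub1)
                (integrableOn_const ?_) measurableSet_Ioc ?_
              · rw [Real.volume_Ioc]; exact ENNReal.ofReal_ne_top
              · intro t ht; exact density_le_varAux hρi hE (le_trans hn0 ht.1.le)
          _ = (T - ((n:ℕ):ℝ)) * VR := by
              rw [setIntegral_const, smul_eq_mul, measureReal_def, Real.volume_Ioc,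
                ENNReal.toReal_ofReal (by linarith)]
          _ ≤ 1 * VR := mul_le_mul_of_nonneg_right (by linarith) hVR0
          _ = VR := one_mul _
      have hcd : ∀ z : K, |dppPayoff Vmap g ρ T z - dppPayoff Vmap g ρ ((n:ℕ):ℝ) z|
          ≤ VR + VR := by
        intro z
        have hzT : z.1 T = z.1 ((n:ℕ):ℝ) := by
          have hs := hstep z.1 z.2 n (T - ((n:ℕ):ℝ)) ⟨by linarith, by linarith⟩
          rw [show T = ((n:ℕ):ℝ) + (T - ((n:ℕ):ℝ)) by ring, hs]
        have hgz : ∀ t ∈ Ioc ((n:ℕ):ℝ) T, g (z.1 t) = g (z.1 ((n:ℕ):ℝ)) := by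
          intro t ht
          have hs := hstep z.1 z.2 n (t - ((n:ℕ):ℝ)) ⟨by linarith [ht.1], by linarith [ht.2]⟩
          rw [show t = ((n:ℕ):ℝ) + (t - ((n:ℕ):ℝ)) by ring, hs]
        have hprod : IntegrableOn (fun t => ρ t * g (z.1 t)) (Ioi 0) :=
          payoff_intAux hg hgm hρm hρ0 hρi z
        have hsplit2 : (∫ t in Ioc (0:ℝ) T, ρ t * g (z.1 t))
            = (∫ t in Ioc (0:ℝ) ((n:ℕ):ℝ), ρ t * g (z.1 t))
              + ∫ t in Ioc ((n:ℕ):ℝ) T, ρ t * g (z.1 t) := by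
          rw [← Ioc_union_Ioc_eq_Ioc hn0 hnT,
            setIntegral_union (Ioc_disjoint_Ioc_of_le le_rfl) measurableSet_Ioc
              (hprod.mono_set Ioc_subset_Ioi_self)
              (hprod.mono_set (Ioc_subset_Ioi_self.trans (Ioi_subset_Ioi hn0)))]
        have hmid : (∫ t in Ioc ((n:ℕ):ℝ) T, ρ t * g (z.1 t))
            = g (z.1 ((n:ℕ):ℝ)) * ∫ t in Ioc ((n:ℕ):ℝ) T, ρ t := by
          rw [setIntegral_congr_fun measurableSet_Ioc
            (fun t ht => by
              show ρ t * g (z.1 t) = ρ t * g (z.1 ((n:ℕ):ℝ))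
              rw [hgz t ht] :
              EqOn (fun t => ρ t * g (z.1 t)) (fun t => ρ t * g (z.1 ((n:ℕ):ℝ)))
                (Ioc ((n:ℕ):ℝ) T)),
            integral_mul_const, mul_comm]
        have hdT : dppPayoff Vmap g ρ T z
            = (∫ t in Ioc (0:ℝ) T, ρ t * g (z.1 t))
              + Vmap.V (fun w : K => ∫ t in Ioi (0:ℝ), ρ (t + T) * g (w.1 t))
                  (z.1 ((n:ℕ):ℝ)) := by
          show (∫ t in Ioc (0:ℝ) T, ρ t * g (z.1 t))
              + (∫ t in Ioi T, ρ t) * gval Vmap g (shiftD ρ T) (z.1 T) = _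
          rw [hzT, ← congrFun hkeyT (z.1 ((n:ℕ):ℝ))]
        have hdN : dppPayoff Vmap g ρ ((n:ℕ):ℝ) z
            = (∫ t in Ioc (0:ℝ) ((n:ℕ):ℝ), ρ t * g (z.1 t))
              + Vmap.V (fun w : K => ∫ t in Ioi (0:ℝ), ρ (t + ((n:ℕ):ℝ)) * g (w.1 t))
                  (z.1 ((n:ℕ):ℝ)) := by
          show (∫ t in Ioc (0:ℝ) ((n:ℕ):ℝ), ρ t * g (z.1 t))
              + (∫ t in Ioi ((n:ℕ):ℝ), ρ t)
                * gval Vmap g (shiftD ρ ((n:ℕ):ℝ)) (z.1 ((n:ℕ):ℝ)) = _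
          rw [← congrFun hkeyN (z.1 ((n:ℕ):ℝ))]
        have heq2 : dppPayoff Vmap g ρ T z - dppPayoff Vmap g ρ ((n:ℕ):ℝ) z
            = g (z.1 ((n:ℕ):ℝ)) * (∫ t in Ioc ((n:ℕ):ℝ) T, ρ t)
              + (Vmap.V (fun w : K => ∫ t in Ioi (0:ℝ), ρ (t + T) * g (w.1 t))
                  (z.1 ((n:ℕ):ℝ))
                - Vmap.V (fun w : K => ∫ t in Ioi (0:ℝ), ρ (t + ((n:ℕ):ℝ)) * g (w.1 t))
                  (z.1 ((n:ℕ):ℝ))) := by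
          rw [hdT, hdN, hsplit2, hmid]; ring
        rw [heq2]
        have hb1 : |g (z.1 ((n:ℕ):ℝ)) * ∫ t in Ioc ((n:ℕ):ℝ) T, ρ t| ≤ VR := by
          rw [abs_mul, abs_of_nonneg (hg _).1, abs_of_nonneg hD0]
          calc g (z.1 ((n:ℕ):ℝ)) * (∫ t in Ioc ((n:ℕ):ℝ) T, ρ t)
              ≤ 1 * ∫ t in Ioc ((n:ℕ):ℝ) T, ρ t :=
                mul_le_mul_of_nonneg_right (hg _).2 hD0
            _ = ∫ t in Ioc ((n:ℕ):ℝ) T, ρ t := one_mul _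
            _ ≤ VR := hDle
        have hb2 : |Vmap.V (fun w : K => ∫ t in Ioi (0:ℝ), ρ (t + T) * g (w.1 t))
              (z.1 ((n:ℕ):ℝ))
            - Vmap.V (fun w : K => ∫ t in Ioi (0:ℝ), ρ (t + ((n:ℕ):ℝ)) * g (w.1 t))
              (z.1 ((n:ℕ):ℝ))| ≤ VR :=
          Vmap.dist_le heTbdd heNbdd hJ _
        calc |g (z.1 ((n:ℕ):ℝ)) * (∫ t in Ioc ((n:ℕ):ℝ) T, ρ t)
              + (Vmap.V (fun w : K => ∫ t in Ioi (0:ℝ), ρ (t + T) * g (w.1 t))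
                  (z.1 ((n:ℕ):ℝ))
                - Vmap.V (fun w : K => ∫ t in Ioi (0:ℝ), ρ (t + ((n:ℕ):ℝ)) * g (w.1 t))
                  (z.1 ((n:ℕ):ℝ)))|
            ≤ |g (z.1 ((n:ℕ):ℝ)) * ∫ t in Ioc ((n:ℕ):ℝ) T, ρ t|
              + |Vmap.V (fun w : K => ∫ t in Ioi (0:ℝ), ρ (t + T) * g (w.1 t))
                  (z.1 ((n:ℕ):ℝ))
                - Vmap.V (fun w : K => ∫ t in Ioi (0:ℝ), ρ (t + ((n:ℕ):ℝ)) * g (w.1 t))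
                  (z.1 ((n:ℕ):ℝ))| := abs_add_le _ _
          _ ≤ VR + VR := add_le_add hb1 hb2
      have hfinal := Vmap.dist_le
        (dppPayoff_bddAux hg hgm Vmap hρm hρ0 hρi hT0.le)
        (dppPayoff_bddAux hg hgm Vmap hρm hρ0 hρi hn0) hcd ω
      rw [hgvn]
      calc ENNReal.ofReal |Vmap.V (dppPayoff Vmap g ρ T) ω
            - Vmap.V (dppPayoff Vmap g ρ ((n:ℕ):ℝ)) ω|
          ≤ ENNReal.ofReal (VR + VR) := ENNReal.ofReal_le_ofReal hfinal
        _ = 2 * eVariationOn ρ (Ici 0) := by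
            rw [← two_mul, ENNReal.ofReal_mul (by norm_num : (0:ℝ) ≤ 2),
              ENNReal.ofReal_ofNat, hVRdef, ENNReal.ofReal_toReal hE]
  refine ⟨main, ?_⟩
  intro κ hκ
  refine ⟨κ / 4, by linarith, ?_⟩
  intro ν hν T hT hvar hint ω
  have h := main ν hν T hT hint ω
  have h2 : ENNReal.ofReal |Vmap.V (dppPayoff Vmap g ν T) ω - gval Vmap g ν ω|
      ≤ ENNReal.ofReal (κ / 2) := by
    calc ENNReal.ofReal |Vmap.V (dppPayoff Vmap g ν T) ω - gval Vmap g ν ω|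
        ≤ 2 * eVariationOn ν (Ici 0) := h
      _ ≤ 2 * ENNReal.ofReal (κ / 4) := mul_le_mul_right hvar.le 2
      _ = ENNReal.ofReal (κ / 2) := by
          rw [show (κ / 2) = 2 * (κ / 4) by ring,
            ENNReal.ofReal_mul (by norm_num : (0:ℝ) ≤ 2), ENNReal.ofReal_ofNat]
  have h3 : |Vmap.V (dppPayoff Vmap g ν T) ω - gval Vmap g ν ω| ≤ κ / 2 :=
    (ENNReal.ofReal_le_ofReal_iff (by linarith)).1 h2
  have hgv : gval Vmap g ν ω = Vmap.V (avePayoff K g ν) ω := rfl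
  rw [hgv] at h3
  linarith
end
end
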